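/- arXiv:1711.03763 — 3 statements merged into one kernel-verified Lean document; each statement's English description precedes it below -/
import Mathlib

section
/- For ψ(x) = |x|^{-(n-p)/p} with 1 ≤ p < n, the weak quotient ‖ψ‖_{p*,∞} / ‖∇ψ‖_{p,∞} equals exactly (p/(n-p)) ω_n^{-1/n}: indeed |∇ψ(x)| = ((n-p)/p)|x|^{-n/p}, ‖ψ‖_{p*,∞} = ω_n^{1/p*}, and ‖∇ψ‖_{p,∞} = ω_n^{1/p} (n-p)/p, so ψ attains equality in the Sobolev–Marcinkiewicz inequality ‖v‖_{p*,∞} ≤ (p/(n-p)) ω_n^{-1/n} ‖∇v‖_{p,∞}. -/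
/-!
Both `ψ` and `|∇ψ|` have the profile `u = c ‖x‖^(-n/r)` on `x ≠ 0`, with `(c, r) = (1, p*)` and
`((n-p)/p, p)`. The superlevel sets of such a profile are balls, so `μ_u(t) = ω_n (c/t)^r` and
`u*(s) = c (ω_n/s)^(1/r)`; thus `t^(1/r) u*(t) = c ω_n^(1/r)` for every `t > 0`, and the supremum
defining `‖u‖_{r,∞}` is attained everywhere. The ratio then follows from `1/p* = 1/p - 1/n`.
-/

open MeasureTheory Set Filter Topology ENNReal

/-- Distribution function of `|u|` with respect to Lebesgue measure on `ℝ^n`. -/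
noncomputable def distrib {n : ℕ} (u : EuclideanSpace ℝ (Fin n) → ℝ) (t : ℝ) : ℝ≥0∞ :=
  volume {x | t < |u x|}

/-- Decreasing rearrangement `u*(s) = sup {t > 0 : μ_u(t) > s}`. -/
noncomputable def rearr {n : ℕ} (u : EuclideanSpace ℝ (Fin n) → ℝ) (s : ℝ) : ℝ :=
  sSup {t : ℝ | 0 < t ∧ ENNReal.ofReal s < distrib u t}

/-- The constant `ω_n` such that the Lebesgue measure of `{|x| < r}` equals `ω_n r^n`. -/
noncomputable def omegaN (n : ℕ) : ℝ :=
  (volume (Metric.ball (0 : EuclideanSpace ℝ (Fin n)) 1)).toReal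

lemma omegaN_pos {n : ℕ} (hn : n ≠ 0) : 0 < omegaN n := by
  have : Nonempty (Fin n) := ⟨⟨0, Nat.pos_of_ne_zero hn⟩⟩
  exact ENNReal.toReal_pos (Metric.measure_ball_pos volume 0 one_pos).ne' measure_ball_lt_top.ne

lemma setOf_lt_abs_sdiff_zero_eq_ball_sdiff_zero {E : Type*} [NormedAddCommGroup E] {u : E → ℝ}
    {c b t : ℝ} (hc : 0 < c) (hb : 0 < b) (ht : 0 < t) (hu : ∀ x ≠ 0, u x = c * ‖x‖ ^ (-b)) :
    {x | t < |u x|} \ {0} = Metric.ball 0 ((c / t) ^ b⁻¹) \ {0} := by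
  ext x
  rcases eq_or_ne x 0 with rfl | hx
  · simp
  have hxpos : 0 < ‖x‖ := norm_pos_iff.2 hx
  simp only [Set.mem_sdiff, mem_ofPred_eq, Metric.mem_ball, dist_zero_right, mem_singleton_iff,
    hx, not_false_eq_true, and_true, hu x hx, abs_of_pos (by positivity : 0 < c * ‖x‖ ^ (-b))]
  rw [Real.rpow_neg hxpos.le, ← div_eq_mul_inv, lt_div_iff₀ (by positivity),
    Real.lt_rpow_inv_iff_of_pos hxpos.le (by positivity) hb, lt_div_iff₀ ht, mul_comm]

section PowerProfile

variable {n : ℕ} {u : EuclideanSpace ℝ (Fin n) → ℝ} {c r : ℝ}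

lemma distrib_eq_of_eq_mul_norm_rpow (hc : 0 < c) (hr : 0 < r) (hn : n ≠ 0)
    (hu : ∀ x ≠ 0, u x = c * ‖x‖ ^ (-(n / r))) {t : ℝ} (ht : 0 < t) :
    distrib u t = ENNReal.ofReal ((c / t) ^ r * omegaN n) := by
  have : Nonempty (Fin n) := ⟨⟨0, Nat.pos_of_ne_zero hn⟩⟩
  have hb : 0 < (n : ℝ) / r := by positivity
  have hradius : ((c / t) ^ ((n : ℝ) / r)⁻¹) ^ n = (c / t) ^ r := by
    rw [← Real.rpow_natCast, ← Real.rpow_mul (by positivity), inv_div,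
      div_mul_cancel₀ _ (by exact_mod_cast hn)]
  -- `{0}` is null, so the (junk) value `u 0` is irrelevant.
  rw [distrib, ← measure_sdiff_null (measure_singleton 0),
    setOf_lt_abs_sdiff_zero_eq_ball_sdiff_zero hc hb ht hu,
    measure_sdiff_null (measure_singleton 0), Measure.addHaar_ball_of_pos _ _ (by positivity),
    finrank_euclideanSpace_fin, hradius, omegaN,
    ENNReal.ofReal_mul (by positivity), ENNReal.ofReal_toReal measure_ball_lt_top.ne]

lemma rearr_eq_of_eq_mul_norm_rpow (hc : 0 < c) (hr : 0 < r) (hn : n ≠ 0)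
    (hu : ∀ x ≠ 0, u x = c * ‖x‖ ^ (-(n / r))) {s : ℝ} (hs : 0 < s) :
    rearr u s = c * (omegaN n / s) ^ r⁻¹ := by
  have hω := omegaN_pos hn
  have hlevel : {t : ℝ | 0 < t ∧ ENNReal.ofReal s < distrib u t} =
      Ioo 0 (c * (omegaN n / s) ^ r⁻¹) := by
    ext t
    simp only [mem_ofPred_eq, mem_Ioo, and_congr_right_iff]
    intro ht
    rw [distrib_eq_of_eq_mul_norm_rpow hc hr hn hu ht,
      ENNReal.ofReal_lt_ofReal_iff (by positivity), ← div_lt_iff₀ hω,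
      ← Real.rpow_inv_lt_iff_of_pos (by positivity) (by positivity) hr, lt_div_iff₀ ht,
      Real.div_rpow hω.le hs.le, mul_div_assoc', lt_div_iff₀ (by positivity),
      Real.div_rpow hs.le hω.le, div_mul_eq_mul_div, div_lt_iff₀ (by positivity), mul_comm]
  rw [rearr, hlevel, csSup_Ioo (by positivity)]

lemma sSup_rpow_mul_rearr_eq_of_eq_mul_norm_rpow (hc : 0 < c) (hr : 0 < r) (hn : n ≠ 0)
    (hu : ∀ x ≠ 0, u x = c * ‖x‖ ^ (-(n / r))) :
    sSup ((fun t : ℝ => t ^ (1 / r) * rearr u t) '' Ioi 0) = omegaN n ^ (1 / r) * c := by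
  have hω := omegaN_pos hn
  have hconst : ∀ t ∈ Ioi (0 : ℝ), t ^ (1 / r) * rearr u t = omegaN n ^ (1 / r) * c := by
    intro t ht
    have ht_pow : t ^ (1 / r) ≠ 0 := (Real.rpow_pos_of_pos ht _).ne'
    rw [rearr_eq_of_eq_mul_norm_rpow hc hr hn hu ht, Real.div_rpow hω.le ht.le, one_div]
    field_simp
  rw [image_congr hconst, nonempty_Ioi.image_const, csSup_singleton]

end PowerProfile

lemma norm_fderiv_norm_rpow_of_ne_zero {E : Type*} [NormedAddCommGroup E] [InnerProductSpace ℝ E]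
    (a : ℝ) {x : E} (hx : x ≠ 0) :
    ‖fderiv ℝ (fun y : E => ‖y‖ ^ a) x‖ = |a| * ‖x‖ ^ (a - 1) := by
  have : Nontrivial E := ⟨⟨x, 0, hx⟩⟩
  have hxpos : 0 < ‖x‖ := norm_pos_iff.2 hx
  have hnorm : DifferentiableAt ℝ (‖·‖) x := (contDiffAt_norm ℝ hx).differentiableAt one_ne_zero
  have hderiv : HasFDerivAt (fun y : E => ‖y‖ ^ a) _ x :=
    (Real.hasDerivAt_rpow_const (Or.inl hxpos.ne')).comp_hasFDerivAt x hnorm.hasFDerivAt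
  rw [hderiv.fderiv, norm_smul, norm_fderiv_norm hnorm, mul_one, Real.norm_eq_abs, abs_mul,
    abs_of_pos (Real.rpow_pos_of_pos hxpos _)]

/-- `ψ(x) = |x|^{-(n-p)/p}` attains equality in the Sobolev–Marcinkiewicz
inequality: `|∇ψ(x)| = ((n-p)/p)|x|^{-n/p}`, `‖ψ‖_{p*,∞} = ω_n^{1/p*}`,
`‖∇ψ‖_{p,∞} = ω_n^{1/p}(n-p)/p`, hence `‖ψ‖_{p*,∞} = (p/(n-p)) ω_n^{-1/n} ‖∇ψ‖_{p,∞}`. -/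
theorem psi_extremal {n : ℕ} (p : ℝ) (hp : 1 ≤ p) (hpn : p < n)
    (ps : ℝ) (hps : ps = n * p / (n - p))
    (ψ : EuclideanSpace ℝ (Fin n) → ℝ)
    (hψ : ∀ x, ψ x = ‖x‖ ^ (-((n:ℝ) - p) / p)) :
    (∀ x : EuclideanSpace ℝ (Fin n), x ≠ 0 →
        ‖fderiv ℝ ψ x‖ = (((n:ℝ) - p) / p) * ‖x‖ ^ (-(n:ℝ) / p)) ∧
    sSup ((fun t : ℝ => t ^ (1/ps) * rearr ψ t) '' Set.Ioi 0) = omegaN n ^ (1/ps) ∧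
    sSup ((fun t : ℝ => t ^ (1/p) * rearr (fun x => ‖fderiv ℝ ψ x‖) t) '' Set.Ioi 0)
      = omegaN n ^ (1/p) * (((n:ℝ) - p) / p) ∧
    sSup ((fun t : ℝ => t ^ (1/ps) * rearr ψ t) '' Set.Ioi 0)
      = (p / ((n:ℝ) - p)) * omegaN n ^ (-(1:ℝ)/(n:ℝ)) *
        sSup ((fun t : ℝ => t ^ (1/p) * rearr (fun x => ‖fderiv ℝ ψ x‖) t) '' Set.Ioi 0) := by
  have hp0 : 0 < p := by linarith
  have hnp : 0 < (n : ℝ) - p := by linarith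
  have hn : n ≠ 0 := by rintro rfl; norm_num at hpn; linarith
  have hps0 : 0 < ps := by rw [hps]; positivity
  have hψ_profile : ∀ x ≠ 0, ψ x = 1 * ‖x‖ ^ (-(n / ps)) := fun x _ => by
    rw [hψ, one_mul, hps]
    congr 1
    field_simp
  have hgrad : ∀ x ≠ 0, ‖fderiv ℝ ψ x‖ = ((n - p) / p) * ‖x‖ ^ (-(n : ℝ) / p) := by
    intro x hx
    rw [funext hψ, norm_fderiv_norm_rpow_of_ne_zero _ hx, neg_div, abs_neg,
      abs_of_pos (div_pos hnp hp0)]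
    congr 2
    field_simp
    ring
  have hψ_weak := sSup_rpow_mul_rearr_eq_of_eq_mul_norm_rpow one_pos hps0 hn hψ_profile
  have hgrad_weak := sSup_rpow_mul_rearr_eq_of_eq_mul_norm_rpow (u := fun x => ‖fderiv ℝ ψ x‖)
    (div_pos hnp hp0) hp0 hn (fun x hx => by rw [hgrad x hx, neg_div])
  refine ⟨hgrad, by rw [hψ_weak, mul_one], hgrad_weak, ?_⟩
  have hexp : 1 / ps = -1 / n + 1 / p := by
    rw [hps]
    field_simp
    ring
  rw [hψ_weak, hgrad_weak, mul_one, hexp, Real.rpow_add (omegaN_pos hn)]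
  field_simp
end

section
/- Let 1 < p < n and let u : (0,1] → [0,∞) be Lipschitz, nonincreasing, with u(1) = 0 and ∫₀^1 |u'(t)|^p t^{n-1} dt < ∞. With v(r) = ∫_r^1 ρ^{-n/p} ∫_ρ^1 |u'(t)|^p t^{n-1} dt dρ, one has ∫₀^1 u(ρ)^p ρ^{n-p-1} dρ ≤ (p/(n-p))^{p-1} sup_{0<r<1} r^{(n-p)/p} v(r). -/
/-!
By Hölder's inequality with the weight `t ^ ((p - 1) * n / p ^ 2)`, the bound `u ρ ≤ ∫_ρ^1 |u'|`
gives `u(ρ)^p ≤ (p/(n-p))^{p-1} ρ^{-(n-p)(p-1)/p} ∫_ρ^1 |u'|^p t^{(p-1)n/p}`. Multiplying by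
`ρ^{n-p-1}`, integrating over `(ε, 1]` and exchanging the order of integration yields the truncated
Hardy inequality `∫_ε^1 u^p ρ^{n-p-1} ≤ (p/(n-p))^p I(ε)` with `I(ε) = ∫_ε^1 |u'|^p t^{n-1}`.
Since `I` is nonincreasing, `r^{(n-p)/p} v(r) ≥ I(ε) r^{(n-p)/p} ∫_r^ε ρ^{-n/p} dρ`, and the right
side tends to `(p/(n-p)) I(ε)` as `r → 0`; hence `(p/(n-p)) I(ε)` is at most the supremum, and
letting `ε → 0` gives the inequality.
-/

open MeasureTheory Set Filter Topology

theorem continuousOn_rpow_const_Icc {a : ℝ} (b e : ℝ) (ha : 0 < a) :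
    ContinuousOn (fun t : ℝ => t ^ e) (Icc a b) :=
  continuousOn_id.rpow_const fun _ ht => Or.inl (ha.trans_le ht.1).ne'

theorem MeasureTheory.IntegrableOn.mul_rpow_Ioc {f : ℝ → ℝ} {a b : ℝ} (e : ℝ) (ha : 0 < a)
    (hf : IntegrableOn f (Ioc a b)) : IntegrableOn (fun t => f t * t ^ e) (Ioc a b) :=
  hf.mul_continuousOn_of_subset (continuousOn_rpow_const_Icc b e ha) measurableSet_Ioc
    isCompact_Icc Ioc_subset_Icc_self

theorem MeasureTheory.IntegrableOn.mul_rpow_Ioc_of_mul_rpow {f : ℝ → ℝ} {a b x : ℝ}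
    (ha : 0 < a) (hf : IntegrableOn (fun t => f t * t ^ x) (Ioc a b)) (y : ℝ) :
    IntegrableOn (fun t => f t * t ^ y) (Ioc a b) :=
  (hf.mul_rpow_Ioc (y - x) ha).congr_fun (fun t ht => by
    dsimp only
    rw [mul_assoc, ← Real.rpow_add (ha.trans ht.1), add_sub_cancel]) measurableSet_Ioc

theorem integrableOn_Ioc_rpow {a : ℝ} (b e : ℝ) (ha : 0 < a) :
    IntegrableOn (fun t : ℝ => t ^ e) (Ioc a b) :=
  ((continuousOn_rpow_const_Icc b e ha).integrableOn_Icc).mono_set Ioc_subset_Icc_self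

theorem AntitoneOn.integrableOn_rpow_mul {I : ℝ → ℝ} {a b : ℝ} (e : ℝ) (ha : 0 < a)
    (hI : AntitoneOn I (Icc a b)) : IntegrableOn (fun t => t ^ e * I t) (Ioc a b) :=
  ((hI.integrableOn_isCompact isCompact_Icc).continuousOn_mul
    (continuousOn_rpow_const_Icc b e ha) isCompact_Icc).mono_set Ioc_subset_Icc_self

theorem antitoneOn_setIntegral_Ioc {h : ℝ → ℝ} {a b : ℝ} (hh : IntegrableOn h (Ioc a b))
    (h0 : ∀ t ∈ Ioc a b, 0 ≤ h t) : AntitoneOn (fun z => ∫ t in Ioc z b, h t) (Ici a) :=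
  fun _ hx _ _ hxy => setIntegral_mono_set (hh.mono_set (Ioc_subset_Ioc_left hx))
    (ae_restrict_of_forall_mem measurableSet_Ioc fun t ht => h0 t (Ioc_subset_Ioc_left hx ht))
    (Ioc_subset_Ioc_left hxy).eventuallyLE

theorem integral_Ioc_rpow_neg_succ {α r s : ℝ} (hα : 0 < α) (hr : 0 < r) (hrs : r ≤ s) :
    ∫ t in Ioc r s, t ^ (-(α + 1)) = (r ^ (-α) - s ^ (-α)) / α := by
  have h0 : (0 : ℝ) ∉ uIcc r s := by
    rw [uIcc_of_le hrs]; exact fun h => hr.not_ge h.1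
  rw [← intervalIntegral.integral_of_le hrs, integral_rpow (Or.inr ⟨by linarith, h0⟩),
    show -(α + 1) + 1 = -α by ring, div_neg, ← neg_div, neg_sub]

theorem integral_Ioc_rpow_neg_succ_le {α r : ℝ} (s : ℝ) (hα : 0 < α) (hr : 0 < r) :
    ∫ t in Ioc r s, t ^ (-(α + 1)) ≤ r ^ (-α) / α := by
  rcases le_or_gt r s with hrs | hsr
  · rw [integral_Ioc_rpow_neg_succ hα hr hrs]
    gcongr
    linarith [Real.rpow_nonneg (hr.le.trans hrs) (-α)]
  · rw [Ioc_eq_empty_of_le hsr.le, setIntegral_empty]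
    positivity

theorem integral_Ioc_rpow_sub_one_le {α a t : ℝ} (hα : 0 < α) (ha : 0 ≤ a) (hat : a ≤ t) :
    ∫ ρ in Ioc a t, ρ ^ (α - 1) ≤ t ^ α / α := by
  rw [← intervalIntegral.integral_of_le hat, integral_rpow (Or.inl (by linarith)),
    sub_add_cancel]
  gcongr
  linarith [Real.rpow_nonneg ha α]

theorem LipschitzOnWith.integral_Ioc_eq_sub {f f' : ℝ → ℝ} {K : NNReal} {a b : ℝ}
    (hf : LipschitzOnWith K f (Icc a b)) (hab : a ≤ b)
    (hd : ∀ᵐ t, t ∈ Ioo a b → HasDerivAt f (f' t) t) :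
    IntegrableOn f' (Ioc a b) ∧ ∫ t in Ioc a b, f' t = f b - f a := by
  have hac : AbsolutelyContinuousOnInterval f a b :=
    (uIcc_of_le hab ▸ hf).absolutelyContinuousOnInterval
  have hderiv : deriv f =ᵐ[volume.restrict (Ioc a b)] f' := by
    rw [← Measure.restrict_congr_set Ioo_ae_eq_Ioc]
    filter_upwards [ae_restrict_mem measurableSet_Ioo, ae_restrict_of_ae hd] with t ht hdt
    exact (hdt ht).deriv
  refine ⟨(((intervalIntegrable_iff_integrableOn_Ioc_of_le hab).1
    hac.intervalIntegrable_deriv)).congr_fun_ae hderiv, ?_⟩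
  rw [← integral_congr_ae hderiv, ← intervalIntegral.integral_of_le hab,
    hac.integral_deriv_eq_sub]

theorem setIntegral_mul_setIntegral_Ioc_comm {φ h : ℝ → ℝ} {a b : ℝ}
    (hφ : IntegrableOn φ (Ioc a b)) (hh : IntegrableOn h (Ioc a b)) :
    ∫ ρ in Ioc a b, φ ρ * ∫ t in Ioc ρ b, h t = ∫ t in Ioc a b, (∫ ρ in Ioc a t, φ ρ) * h t := by
  set W : ℝ × ℝ → ℝ := {x | x.1 < x.2}.indicator fun x => φ x.1 * h x.2
  have hW : Integrable W ((volume.restrict (Ioc a b)).prod (volume.restrict (Ioc a b))) :=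
    (hφ.mul_prod hh).indicator (measurableSet_lt measurable_fst measurable_snd)
  have hfst : ∀ ρ ∈ Ioc a b, ∫ t in Ioc a b, W (ρ, t) = φ ρ * ∫ t in Ioc ρ b, h t := by
    intro ρ hρ
    have : Ioc a b ∩ Ioi ρ = Ioc ρ b := by
      ext t; simp only [mem_inter_iff, mem_Ioc, mem_Ioi]
      exact ⟨fun ⟨⟨_, htb⟩, hρt⟩ => ⟨hρt, htb⟩, fun ⟨hρt, htb⟩ => ⟨⟨hρ.1.trans hρt, htb⟩, hρt⟩⟩
    rw [← integral_const_mul, ← this, ← setIntegral_indicator measurableSet_Ioi]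
    rfl
  have hsnd : ∀ t ∈ Ioc a b, ∫ ρ in Ioc a b, W (ρ, t) = (∫ ρ in Ioc a t, φ ρ) * h t := by
    intro t ht
    have : Ioc a b ∩ Iio t = Ioo a t := by
      ext ρ; simp only [mem_inter_iff, mem_Ioc, mem_Iio, mem_Ioo]
      exact ⟨fun ⟨⟨haρ, _⟩, hρt⟩ => ⟨haρ, hρt⟩,
        fun ⟨haρ, hρt⟩ => ⟨⟨haρ, (hρt.trans_le ht.2).le⟩, hρt⟩⟩
    rw [integral_Ioc_eq_integral_Ioo (y := t), ← integral_mul_const, ← this,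
      ← setIntegral_indicator measurableSet_Iio]
    rfl
  rw [← setIntegral_congr_fun measurableSet_Ioc hfst,
    ← setIntegral_congr_fun measurableSet_Ioc hsnd]
  exact integral_integral_swap hW

theorem setIntegral_rpow_mul_setIntegral_Ioc_le {α a b : ℝ} {h : ℝ → ℝ} (hα : 0 < α)
    (ha : 0 < a) (hh : IntegrableOn h (Ioc a b)) (h0 : ∀ t ∈ Ioc a b, 0 ≤ h t) :
    ∫ ρ in Ioc a b, ρ ^ (α - 1) * ∫ t in Ioc ρ b, h t ≤ α⁻¹ * ∫ t in Ioc a b, t ^ α * h t := by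
  rw [setIntegral_mul_setIntegral_Ioc_comm (integrableOn_Ioc_rpow b _ ha) hh,
    ← integral_const_mul]
  refine integral_mono_of_nonneg (ae_restrict_of_forall_mem measurableSet_Ioc fun t ht =>
      mul_nonneg (setIntegral_nonneg measurableSet_Ioc fun ρ hρ =>
        Real.rpow_nonneg (ha.trans hρ.1).le _) (h0 t ht))
    (((hh.mul_rpow_Ioc α ha).congr_fun (fun t _ => mul_comm _ _) measurableSet_Ioc).const_mul _)
    (ae_restrict_of_forall_mem measurableSet_Ioc fun t ht => ?_)
  calc (∫ ρ in Ioc a t, ρ ^ (α - 1)) * h t ≤ t ^ α / α * h t :=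
        mul_le_mul_of_nonneg_right (integral_Ioc_rpow_sub_one_le hα ha.le ht.1.le) (h0 t ht)
    _ = α⁻¹ * (t ^ α * h t) := by ring

theorem memLp_ofReal_of_integrable_rpow {X : Type*} [MeasurableSpace X] {μ : Measure X} {r : ℝ}
    (hr : 0 < r) {g : X → ℝ} (hg0 : 0 ≤ᵐ[μ] g) (hgm : AEStronglyMeasurable g μ)
    (hg : Integrable (fun x => g x ^ r) μ) : MemLp g (ENNReal.ofReal r) μ := by
  refine (integrable_norm_rpow_iff hgm (by simpa using hr) ENNReal.ofReal_ne_top).1 (hg.congr ?_)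
  filter_upwards [hg0] with x hx
  rw [ENNReal.toReal_ofReal hr.le, Real.norm_of_nonneg hx]

theorem rpow_integral_le_of_holder {X : Type*} [MeasurableSpace X] {μ : Measure X} {p q : ℝ}
    (hpq : p.HolderConjugate q) {f φ : X → ℝ} (hf : 0 ≤ᵐ[μ] f) (hφ : ∀ᵐ x ∂μ, 0 < φ x)
    (hfm : AEStronglyMeasurable f μ) (hφm : AEStronglyMeasurable φ μ)
    (hfφ : Integrable (fun x => f x ^ p * φ x ^ p) μ) (hφq : Integrable (fun x => φ x ^ (-q)) μ) :
    (∫ x, f x ∂μ) ^ p ≤ (∫ x, f x ^ p * φ x ^ p ∂μ) * (∫ x, φ x ^ (-q) ∂μ) ^ (p - 1) := by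
  have hp0 : (0 : ℝ) < p := hpq.pos
  have hq0 : (0 : ℝ) < q := hpq.symm.pos
  have hF0 : 0 ≤ᵐ[μ] fun x => f x * φ x := by
    filter_upwards [hf, hφ] with x hx hφx using mul_nonneg hx hφx.le
  have hG0 : 0 ≤ᵐ[μ] fun x => (φ x)⁻¹ := by
    filter_upwards [hφ] with x hφx using (inv_pos.2 hφx).le
  have hholder := integral_mul_le_Lp_mul_Lq_of_nonneg hpq hF0 hG0
    (memLp_ofReal_of_integrable_rpow hp0 hF0 (hfm.mul hφm) (hfφ.congr (by
      filter_upwards [hf, hφ] with x hx hφx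
      rw [Real.mul_rpow hx hφx.le])))
    (memLp_ofReal_of_integrable_rpow hq0 hG0 hφm.aemeasurable.inv.aestronglyMeasurable
      (hφq.congr (by
        filter_upwards [hφ] with x hφx
        rw [Real.rpow_neg hφx.le, Real.inv_rpow hφx.le])))
  have hcancel : ∫ x, f x * φ x * (φ x)⁻¹ ∂μ = ∫ x, f x ∂μ := integral_congr_ae (by
    filter_upwards [hφ] with x hφx using by field_simp)
  have hA : ∫ x, (f x * φ x) ^ p ∂μ = ∫ x, f x ^ p * φ x ^ p ∂μ := integral_congr_ae (by
    filter_upwards [hf, hφ] with x hx hφx using Real.mul_rpow hx hφx.le)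
  have hB : ∫ x, (φ x)⁻¹ ^ q ∂μ = ∫ x, φ x ^ (-q) ∂μ := integral_congr_ae (by
    filter_upwards [hφ] with x hφx using by rw [Real.rpow_neg hφx.le, Real.inv_rpow hφx.le])
  rw [hcancel, hA, hB] at hholder
  have hA0 : 0 ≤ ∫ x, f x ^ p * φ x ^ p ∂μ := integral_nonneg_of_ae (by
    filter_upwards [hf, hφ] with x hx hφx
    using mul_nonneg (Real.rpow_nonneg hx p) (Real.rpow_nonneg hφx.le p))
  have hB0 : 0 ≤ ∫ x, φ x ^ (-q) ∂μ := integral_nonneg_of_ae (by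
    filter_upwards [hφ] with x hφx using Real.rpow_nonneg hφx.le _)
  have hpq' : 1 / q * p = p - 1 := by
    have := hpq.inv_add_inv_eq_one
    field_simp at this ⊢
    linarith
  calc (∫ x, f x ∂μ) ^ p
      ≤ ((∫ x, f x ^ p * φ x ^ p ∂μ) ^ (1 / p) * (∫ x, φ x ^ (-q) ∂μ) ^ (1 / q)) ^ p :=
        Real.rpow_le_rpow (integral_nonneg_of_ae hf) hholder hp0.le
    _ = (∫ x, f x ^ p * φ x ^ p ∂μ) * (∫ x, φ x ^ (-q) ∂μ) ^ (p - 1) := by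
        rw [Real.mul_rpow (by positivity) (by positivity), ← Real.rpow_mul hA0,
          ← Real.rpow_mul hB0, one_div_mul_cancel hp0.ne', Real.rpow_one, hpq']

theorem rpow_setIntegral_Ioc_abs_le {n p ρ b : ℝ} {w : ℝ → ℝ} (hp : 1 < p) (hpn : p < n)
    (hρ : 0 < ρ) (hw : AEStronglyMeasurable w (volume.restrict (Ioc ρ b)))
    (hint : IntegrableOn (fun t => |w t| ^ p * t ^ ((p - 1) * n / p)) (Ioc ρ b)) :
    (∫ t in Ioc ρ b, |w t|) ^ p ≤ (p / (n - p) * ρ ^ (-((n - p) / p))) ^ (p - 1) *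
      ∫ t in Ioc ρ b, |w t| ^ p * t ^ ((p - 1) * n / p) := by
  have hp0 : 0 < p := by linarith
  have hα : 0 < (n - p) / p := div_pos (by linarith) hp0
  set q := p.conjExponent with hq
  -- the weight `t ^ β` is chosen so that `β * p = (p - 1) * n / p` and `β * q = n / p`
  set β := (p - 1) * n / p ^ 2 with hβ
  have hweight : EqOn (fun t => |w t| ^ p * (t ^ β) ^ p)
      (fun t => |w t| ^ p * t ^ ((p - 1) * n / p)) (Ioc ρ b) := fun t ht => by
    dsimp only
    rw [← Real.rpow_mul (hρ.trans ht.1).le, hβ]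
    field_simp
  have hdual : EqOn (fun t => (t ^ β) ^ (-q)) (fun t => t ^ (-((n - p) / p + 1))) (Ioc ρ b) :=
    fun t ht => by
      dsimp only
      rw [← Real.rpow_mul (hρ.trans ht.1).le, hβ, hq, Real.conjExponent]
      have : p - 1 ≠ 0 := by linarith
      congr 1
      field_simp
      ring
  have hholder := rpow_integral_le_of_holder (.conjExponent hp) (f := fun t => |w t|)
    (φ := fun t => t ^ β) (Eventually.of_forall fun t => abs_nonneg (w t))
    (ae_restrict_of_forall_mem measurableSet_Ioc fun t ht => Real.rpow_pos_of_pos (hρ.trans ht.1) β)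
    hw.norm (measurable_id.pow_const β).aestronglyMeasurable
    ((integrableOn_congr_fun hweight measurableSet_Ioc).2 hint)
    ((integrableOn_congr_fun hdual measurableSet_Ioc).2 (integrableOn_Ioc_rpow b _ hρ))
  rw [setIntegral_congr_fun measurableSet_Ioc hweight,
    setIntegral_congr_fun measurableSet_Ioc hdual, mul_comm] at hholder
  refine hholder.trans ?_
  gcongr
  · exact setIntegral_nonneg measurableSet_Ioc fun t ht =>
      mul_nonneg (Real.rpow_nonneg (abs_nonneg _) _) (Real.rpow_nonneg (hρ.trans ht.1).le _)
  · exact setIntegral_nonneg measurableSet_Ioc fun t ht =>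
      Real.rpow_nonneg (hρ.trans ht.1).le _
  · refine (integral_Ioc_rpow_neg_succ_le b hα hρ).trans_eq ?_
    rw [div_eq_inv_mul, inv_div]

theorem rpow_mul_rpow_le_of_le_setIntegral_abs {n p ρ b x : ℝ} {w : ℝ → ℝ} (hp : 1 < p)
    (hpn : p < n) (hρ : 0 < ρ) (hw : AEStronglyMeasurable w (volume.restrict (Ioc ρ b)))
    (hint : IntegrableOn (fun t => |w t| ^ p * t ^ ((p - 1) * n / p)) (Ioc ρ b))
    (hx0 : 0 ≤ x) (hx : x ≤ ∫ t in Ioc ρ b, |w t|) :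
    x ^ p * ρ ^ (n - p - 1) ≤ (p / (n - p)) ^ (p - 1) *
      (ρ ^ ((n - p) / p - 1) * ∫ t in Ioc ρ b, |w t| ^ p * t ^ ((p - 1) * n / p)) := by
  have hexp : ρ ^ (-((n - p) / p) * (p - 1)) * ρ ^ (n - p - 1) = ρ ^ ((n - p) / p - 1) := by
    rw [← Real.rpow_add hρ]
    congr 1
    field_simp
    ring
  calc x ^ p * ρ ^ (n - p - 1) ≤ (∫ t in Ioc ρ b, |w t|) ^ p * ρ ^ (n - p - 1) := by gcongr
    _ ≤ (p / (n - p) * ρ ^ (-((n - p) / p))) ^ (p - 1) *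
          (∫ t in Ioc ρ b, |w t| ^ p * t ^ ((p - 1) * n / p)) * ρ ^ (n - p - 1) := by
        gcongr
        exact rpow_setIntegral_Ioc_abs_le hp hpn hρ hw hint
    _ = _ := by
        rw [Real.mul_rpow (by positivity) (by positivity), ← Real.rpow_mul hρ.le, ← hexp]
        ring

theorem hardy_inequality_Ioc {n p a b : ℝ} {u w : ℝ → ℝ} (hp : 1 < p) (hpn : p < n) (ha : 0 < a)
    (hw : AEStronglyMeasurable w (volume.restrict (Ioc a b)))
    (hint : IntegrableOn (fun t => |w t| ^ p * t ^ (n - 1)) (Ioc a b))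
    (hu : ∀ ρ ∈ Ioc a b, 0 ≤ u ρ ∧ u ρ ≤ ∫ t in Ioc ρ b, |w t|) :
    ∫ ρ in Ioc a b, u ρ ^ p * ρ ^ (n - p - 1) ≤
      (p / (n - p)) ^ p * ∫ t in Ioc a b, |w t| ^ p * t ^ (n - 1) := by
  have hp0 : 0 < p := by linarith
  set α := (n - p) / p with hα_def
  have hα : 0 < α := div_pos (by linarith) hp0
  set c := p / (n - p) with hc
  have hcα : c = α⁻¹ := by rw [hc, hα_def, inv_div]
  set h : ℝ → ℝ := fun t => |w t| ^ p * t ^ ((p - 1) * n / p) with h_def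
  have hh0 : ∀ t ∈ Ioc a b, 0 ≤ h t := fun t ht =>
    mul_nonneg (Real.rpow_nonneg (abs_nonneg _) _) (Real.rpow_nonneg (ha.trans ht.1).le _)
  have hweight : EqOn (fun t => t ^ α * h t) (fun t => |w t| ^ p * t ^ (n - 1)) (Ioc a b) :=
    fun t ht => by
      dsimp only [h_def]
      rw [mul_left_comm, ← Real.rpow_add (ha.trans ht.1), hα_def]
      congr 2
      field_simp
      ring
  have hh_int : IntegrableOn h (Ioc a b) := hint.mul_rpow_Ioc_of_mul_rpow ha _
  set J : ℝ → ℝ := fun ρ => ∫ t in Ioc ρ b, h t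
  have hpoint (ρ : ℝ) (hρ : ρ ∈ Ioc a b) :
      u ρ ^ p * ρ ^ (n - p - 1) ≤ c ^ (p - 1) * (ρ ^ (α - 1) * J ρ) :=
    have hsub : Ioc ρ b ⊆ Ioc a b := Ioc_subset_Ioc_left hρ.1.le
    rpow_mul_rpow_le_of_le_setIntegral_abs hp hpn (ha.trans hρ.1)
      (hw.mono_measure (Measure.restrict_mono hsub le_rfl)) (hh_int.mono_set hsub) (hu ρ hρ).1
      (hu ρ hρ).2
  have hJ_int : IntegrableOn (fun ρ => ρ ^ (α - 1) * J ρ) (Ioc a b) :=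
    ((antitoneOn_setIntegral_Ioc hh_int hh0).mono Icc_subset_Ici_self).integrableOn_rpow_mul
      (α - 1) ha
  calc ∫ ρ in Ioc a b, u ρ ^ p * ρ ^ (n - p - 1)
      ≤ ∫ ρ in Ioc a b, c ^ (p - 1) * (ρ ^ (α - 1) * J ρ) :=
        integral_mono_of_nonneg
          (ae_restrict_of_forall_mem measurableSet_Ioc fun ρ hρ =>
            mul_nonneg (Real.rpow_nonneg (hu ρ hρ).1 _) (Real.rpow_nonneg (ha.trans hρ.1).le _))
          (hJ_int.const_mul _) (ae_restrict_of_forall_mem measurableSet_Ioc hpoint)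
    _ ≤ c ^ (p - 1) * (α⁻¹ * ∫ t in Ioc a b, t ^ α * h t) := by
        rw [integral_const_mul]
        gcongr
        exact setIntegral_rpow_mul_setIntegral_Ioc_le hα ha hh_int hh0
    _ = c ^ p * ∫ t in Ioc a b, |w t| ^ p * t ^ (n - 1) := by
        rw [setIntegral_congr_fun measurableSet_Ioc hweight, ← mul_assoc, ← hcα,
          ← Real.rpow_add_one (by positivity), sub_add_cancel]

theorem rpow_mul_setIntegral_rpow_neg_succ_mul_le {α r : ℝ} {I : ℝ → ℝ} (hα : 0 < α)
    (hI : AntitoneOn I (Ioc 0 1)) (hr : r ∈ Ioc 0 1) (hIr : 0 ≤ I r) :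
    r ^ α * ∫ ρ in Ioc r 1, ρ ^ (-(α + 1)) * I ρ ≤ I r / α := by
  have hrα : 0 < r ^ α := Real.rpow_pos_of_pos hr.1 α
  have hint : IntegrableOn (fun ρ => ρ ^ (-(α + 1)) * I ρ) (Ioc r 1) :=
    (hI.mono (Icc_subset_Ioc hr.1 le_rfl)).integrableOn_rpow_mul _ hr.1
  calc r ^ α * ∫ ρ in Ioc r 1, ρ ^ (-(α + 1)) * I ρ
      ≤ r ^ α * ((∫ ρ in Ioc r 1, ρ ^ (-(α + 1))) * I r) := by
        rw [← integral_mul_const]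
        refine mul_le_mul_of_nonneg_left (setIntegral_mono_on hint
          ((integrableOn_Ioc_rpow 1 _ hr.1).mul_const _) measurableSet_Ioc fun ρ hρ => ?_) hrα.le
        exact mul_le_mul_of_nonneg_left (hI ⟨hr.1, hr.2⟩ ⟨hr.1.trans hρ.1, hρ.2⟩ hρ.1.le)
          (Real.rpow_nonneg (hr.1.trans hρ.1).le _)
    _ ≤ r ^ α * (r ^ (-α) / α * I r) := by
        gcongr
        exact integral_Ioc_rpow_neg_succ_le 1 hα hr.1
    _ = I r / α := by
        rw [Real.rpow_neg hr.1.le]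
        field_simp

theorem le_mul_of_forall_rpow_mul_setIntegral_le {α M ε : ℝ} {I : ℝ → ℝ} (hα : 0 < α)
    (hI : AntitoneOn I (Ioc 0 1)) (hI0 : ∀ ρ ∈ Ioc 0 1, 0 ≤ I ρ) (hε : ε ∈ Ioo 0 1)
    (hM : ∀ r ∈ Ioo 0 1, r ^ α * ∫ ρ in Ioc r 1, ρ ^ (-(α + 1)) * I ρ ≤ M) :
    I ε ≤ α * M := by
  have hbound : ∀ r ∈ Ioo 0 ε, I ε * (1 - r ^ α * ε ^ (-α)) / α ≤ M := by
    intro r hr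
    have hrα : 0 < r ^ α := Real.rpow_pos_of_pos hr.1 α
    have hint : IntegrableOn (fun ρ => ρ ^ (-(α + 1)) * I ρ) (Ioc r 1) :=
      (hI.mono (Icc_subset_Ioc hr.1 le_rfl)).integrableOn_rpow_mul _ hr.1
    calc I ε * (1 - r ^ α * ε ^ (-α)) / α = r ^ α * ∫ ρ in Ioc r ε, ρ ^ (-(α + 1)) * I ε := by
          rw [integral_mul_const, integral_Ioc_rpow_neg_succ hα hr.1 hr.2.le,
            Real.rpow_neg hr.1.le]
          field_simp
      _ ≤ r ^ α * ∫ ρ in Ioc r ε, ρ ^ (-(α + 1)) * I ρ := by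
          refine mul_le_mul_of_nonneg_left (setIntegral_mono_on
            ((integrableOn_Ioc_rpow ε _ hr.1).mul_const _)
            (hint.mono_set (Ioc_subset_Ioc_right hε.2.le)) measurableSet_Ioc fun ρ hρ => ?_) hrα.le
          exact mul_le_mul_of_nonneg_left
            (hI ⟨hr.1.trans hρ.1, hρ.2.trans hε.2.le⟩ ⟨hε.1, hε.2.le⟩ hρ.2)
            (Real.rpow_nonneg (hr.1.trans hρ.1).le _)
      _ ≤ r ^ α * ∫ ρ in Ioc r 1, ρ ^ (-(α + 1)) * I ρ := by
          refine mul_le_mul_of_nonneg_left (setIntegral_mono_set hint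
            (ae_restrict_of_forall_mem measurableSet_Ioc fun ρ hρ => ?_)
            (Ioc_subset_Ioc_right hε.2.le).eventuallyLE) hrα.le
          exact mul_nonneg (Real.rpow_nonneg (hr.1.trans hρ.1).le _)
            (hI0 ρ ⟨hr.1.trans hρ.1, hρ.2⟩)
      _ ≤ M := hM r ⟨hr.1, hr.2.trans hε.2⟩
  have hlim : Tendsto (fun r : ℝ => I ε * (1 - r ^ α * ε ^ (-α)) / α) (𝓝[>] 0)
      (𝓝 (I ε / α)) := by
    have : ContinuousAt (fun r : ℝ => I ε * (1 - r ^ α * ε ^ (-α)) / α) 0 := by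
      have := Real.continuousAt_rpow_const 0 α (Or.inr hα.le)
      fun_prop
    simpa [Real.zero_rpow hα.ne'] using this.tendsto.mono_left nhdsWithin_le_nhds
  have := le_of_tendsto hlim (eventually_of_mem (Ioo_mem_nhdsGT hε.1) hbound)
  rwa [div_le_iff₀' hα] at this

theorem setIntegral_Ioc_le_of_forall_Ioc_le {g : ℝ → ℝ} {a b M : ℝ} (hab : a < b)
    (hg0 : ∀ ρ ∈ Ioc a b, 0 ≤ g ρ) (hM : ∀ ε ∈ Ioo a b, ∫ ρ in Ioc ε b, g ρ ≤ M) :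
    ∫ ρ in Ioc a b, g ρ ≤ M := by
  by_cases hg : IntegrableOn g (Ioc a b)
  · have hcont := intervalIntegral.continuousOn_primitive_interval_left
      (uIcc_of_le hab.le ▸ (integrableOn_Icc_iff_integrableOn_Ioc).2 hg)
    have hlim : Tendsto (fun ε => ∫ ρ in ε..b, g ρ) (𝓝[>] a) (𝓝 (∫ ρ in a..b, g ρ)) :=
      ((continuousWithinAt_Icc_iff_Ici hab).1
        (uIcc_of_le hab.le ▸ hcont a left_mem_uIcc)).tendsto.mono_left
        (nhdsWithin_mono _ Ioi_subset_Ici_self)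
    rw [← intervalIntegral.integral_of_le hab.le]
    refine le_of_tendsto hlim (eventually_of_mem (Ioo_mem_nhdsGT hab) fun ε hε => ?_)
    rw [intervalIntegral.integral_of_le hε.2.le]
    exact hM ε hε
  · have hmid : (a + b) / 2 ∈ Ioo a b := ⟨by linarith, by linarith⟩
    rw [integral_undef hg]
    exact (setIntegral_nonneg measurableSet_Ioc fun ρ hρ =>
      hg0 ρ (Ioc_subset_Ioc_left hmid.1.le hρ)).trans (hM _ hmid)

theorem setIntegral_Ioc_le_mul_sSup {α ε : ℝ} {f : ℝ → ℝ} (hα : 0 < α)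
    (hf : IntegrableOn f (Ioc 0 1)) (hf0 : ∀ t ∈ Ioc 0 1, 0 ≤ f t) (hε : ε ∈ Ioo 0 1) :
    ∫ t in Ioc ε 1, f t ≤ α * sSup ((fun r => r ^ α *
      ∫ ρ in Ioc r 1, ρ ^ (-(α + 1)) * ∫ t in Ioc ρ 1, f t) '' Ioo 0 1) := by
  set I : ℝ → ℝ := fun z => ∫ t in Ioc z 1, f t
  have hI : AntitoneOn I (Icc 0 1) := (antitoneOn_setIntegral_Ioc hf hf0).mono Icc_subset_Ici_self
  have hI' : AntitoneOn I (Ioc 0 1) := hI.mono Ioc_subset_Icc_self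
  have hI0 : ∀ ρ ∈ Ioc 0 1, 0 ≤ I ρ := fun ρ hρ => setIntegral_nonneg measurableSet_Ioc
    fun t ht => hf0 t (Ioc_subset_Ioc_left hρ.1.le ht)
  refine le_mul_of_forall_rpow_mul_setIntegral_le hα hI' hI0 hε fun r hr =>
    le_csSup ⟨I 0 / α, ?_⟩ ⟨r, hr, rfl⟩
  rintro _ ⟨r, hr, rfl⟩
  exact (rpow_mul_setIntegral_rpow_neg_succ_mul_le hα hI' (Ioo_subset_Ioc_self hr)
    (hI0 r (Ioo_subset_Ioc_self hr))).trans (div_le_div_of_nonneg_right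
      (hI ⟨le_rfl, zero_le_one⟩ ⟨hr.1.le, hr.2.le⟩ hr.1.le) hα.le)

theorem hardy_lower_bound_general (n p : ℝ) (hp : 1 < p) (hpn : p < n)
    (u u' : ℝ → ℝ) (K : NNReal) (hlip : LipschitzOnWith K u (Set.Ioc 0 1))
    (hnonneg : ∀ t ∈ Set.Ioc (0:ℝ) 1, 0 ≤ u t)
    (hu1 : u 1 = 0)
    (hderiv : ∀ᵐ t ∂volume, t ∈ Set.Ioc (0:ℝ) 1 → HasDerivAt u (u' t) t)
    (hint : IntegrableOn (fun t => |u' t| ^ p * t ^ (n - 1)) (Set.Ioc 0 1))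
    (v : ℝ → ℝ)
    (hv : ∀ r, v r = ∫ ρ in Set.Ioc r 1,
        ρ ^ (-(n / p)) * ∫ t in Set.Ioc ρ 1, |u' t| ^ p * t ^ (n - 1)) :
    ∫ ρ in Set.Ioc (0:ℝ) 1, u ρ ^ p * ρ ^ (n - p - 1)
      ≤ (p / (n - p)) ^ (p - 1) *
        sSup ((fun r => r ^ ((n - p) / p) * v r) '' Set.Ioo 0 1) := by
  have hp0 : 0 < p := by linarith
  set α := (n - p) / p with hα_def
  have hα : 0 < α := div_pos (by linarith) hp0
  have hexp : -(n / p) = -(α + 1) := by rw [hα_def]; field_simp; ring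
  have hconst : (p / (n - p)) ^ (p - 1) = (p / (n - p)) ^ p * α := by
    rw [Real.rpow_sub_one (by positivity), hα_def]
    field_simp
  simp only [hv, hexp, hconst, mul_assoc]
  have hftc (ρ : ℝ) (hρ : ρ ∈ Ioc 0 1) :
      IntegrableOn u' (Ioc ρ 1) ∧ u ρ ≤ ∫ t in Ioc ρ 1, |u' t| := by
    obtain ⟨hint', heq⟩ := (hlip.mono (Icc_subset_Ioc hρ.1 le_rfl)).integral_Ioc_eq_sub hρ.2
      (hderiv.mono fun t ht hto => ht ⟨hρ.1.trans hto.1, hto.2.le⟩)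
    refine ⟨hint', ?_⟩
    calc u ρ = -∫ t in Ioc ρ 1, u' t := by rw [heq, hu1]; ring
      _ ≤ ∫ t in Ioc ρ 1, |u' t| := (neg_le_abs _).trans abs_integral_le_integral_abs
  refine setIntegral_Ioc_le_of_forall_Ioc_le one_pos (fun ρ hρ =>
    mul_nonneg (Real.rpow_nonneg (hnonneg ρ hρ) p) (Real.rpow_nonneg hρ.1.le _)) fun ε hε => ?_
  have hε' : Ioc ε 1 ⊆ Ioc 0 1 := Ioc_subset_Ioc_left hε.1.le
  refine (hardy_inequality_Ioc hp hpn hε.1 (hftc ε (Ioo_subset_Ioc_self hε)).1.aestronglyMeasurable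
    (hint.mono_set hε') fun ρ hρ => ⟨hnonneg ρ (hε' hρ), (hftc ρ (hε' hρ)).2⟩).trans ?_
  gcongr
  exact setIntegral_Ioc_le_mul_sSup hα hint (fun t ht =>
    mul_nonneg (Real.rpow_nonneg (abs_nonneg _) _) (Real.rpow_nonneg ht.1.le _)) hε

/-- the key lower bound:
`∫₀^1 u(ρ)^p ρ^{n-p-1} dρ ≤ (p/(n-p))^{p-1} sup_{0<r<1} r^{(n-p)/p} v(r)`. -/
theorem hardy_lower_bound (n p : ℝ) (hp : 1 < p) (hpn : p < n)
    (u u' : ℝ → ℝ) (K : NNReal) (hlip : LipschitzOnWith K u (Set.Ioc 0 1))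
    (hmono : AntitoneOn u (Set.Ioc 0 1))
    (hnonneg : ∀ t ∈ Set.Ioc (0:ℝ) 1, 0 ≤ u t)
    (hu1 : u 1 = 0)
    (hderiv : ∀ᵐ t ∂volume, t ∈ Set.Ioc (0:ℝ) 1 → HasDerivAt u (u' t) t)
    (hint : IntegrableOn (fun t => |u' t| ^ p * t ^ (n - 1)) (Set.Ioc 0 1))
    (v : ℝ → ℝ)
    (hv : ∀ r, v r = ∫ ρ in Set.Ioc r 1,
        ρ ^ (-(n / p)) * ∫ t in Set.Ioc ρ 1, |u' t| ^ p * t ^ (n - 1)) :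
    ∫ ρ in Set.Ioc (0:ℝ) 1, u ρ ^ p * ρ ^ (n - p - 1)
      ≤ (p / (n - p)) ^ (p - 1) *
        sSup ((fun r => r ^ ((n - p) / p) * v r) '' Set.Ioo 0 1) :=
  hardy_lower_bound_general n p hp hpn u u' K hlip hnonneg hu1 hderiv hint v hv
end

section
/- Let 1 ≤ p < n and q with p < q < ∞. For ε > 0 small, define v_ε(x) = |x|^{-(n-p)/p + ε} for |x| < 1 and v_ε(x) = 1 - ((n-p)/p - ε)(|x| - 1) for 1 ≤ |x| < 1 + ((n-p)/p - ε)^{-1}, extended by 0. Then lim_{ε→0⁺} ‖∇v_ε‖_{p,q}^q / ‖v_ε‖_{p*,q}^q = ω_n^{q/n} ((n-p)/p)^q. Consequently the constant (p/(n-p)) ω_n^{-1/n} in the inequality ‖u‖_{p*,q} ≤ (p/(n-p)) ω_n^{-1/n} ‖∇u‖_{p,q} is sharp. -/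
open MeasureTheory Set Filter Topology ENNReal

namespace SharpAux

noncomputable def vF (n : ℕ) (a : ℝ) (x : EuclideanSpace ℝ (Fin n)) : ℝ :=
  if ‖x‖ < 1 then ‖x‖ ^ (-a) else if ‖x‖ < 1 + a⁻¹ then 1 - a * (‖x‖ - 1) else 0

noncomputable def gF (n : ℕ) (a k : ℝ) (x : EuclideanSpace ℝ (Fin n)) : ℝ :=
  if ‖x‖ < 1 then a * ‖x‖ ^ (-k) else if ‖x‖ < 1 + a⁻¹ then a else 0

noncomputable def rhoV (a t : ℝ) : ℝ := if 1 ≤ t then t ^ (-a⁻¹) else 1 + (1 - t) / a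

noncomputable def rhoG (a k t : ℝ) : ℝ := if a ≤ t then (t / a) ^ (-k⁻¹) else 1 + a⁻¹

lemma rearr_nonneg {n : ℕ} (u : EuclideanSpace ℝ (Fin n) → ℝ) (s : ℝ) : 0 ≤ rearr u s :=
  Real.sSup_nonneg fun _ hx => hx.1.le

lemma omegaN_pos {n : ℕ} (hn : 0 < n) : 0 < omegaN n := by
  have := Fin.pos_iff_nonempty.mp hn
  exact ENNReal.toReal_pos (Metric.measure_ball_pos _ _ one_pos).ne' measure_ball_lt_top.ne

lemma lt_rpow_neg_iff {x y c : ℝ} (hx : 0 < x) (hy : 0 < y) (hc : 0 < c) :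
    y < x ^ (-c) ↔ x < y ^ (-c⁻¹) := by
  have h := Real.lt_rpow_inv_iff_of_neg hy hx (neg_lt_zero.mpr (inv_pos.mpr hc))
  rwa [show (-c⁻¹)⁻¹ = -c by rw [inv_neg, inv_inv]] at h

lemma rhoV_pos {a : ℝ} (ha : 0 < a) (t : ℝ) : 0 < rhoV a t := by
  unfold rhoV
  split
  · exact Real.rpow_pos_of_pos (lt_of_lt_of_le one_pos (by assumption)) _
  · have h2 : ¬ (1:ℝ) ≤ t := by assumption
    push_neg at h2
    have : 0 < (1 - t) / a := div_pos (by linarith) ha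
    linarith

lemma rhoG_pos {a k : ℝ} (ha : 0 < a) (t : ℝ) : 0 < rhoG a k t := by
  unfold rhoG
  split
  · exact Real.rpow_pos_of_pos (div_pos (lt_of_lt_of_le ha (by assumption)) ha) _
  · positivity

lemma volume_ball_diff {n : ℕ} (hn : 0 < n) {r : ℝ} (hr : 0 ≤ r) :
    volume (Metric.ball (0 : EuclideanSpace ℝ (Fin n)) r \ {0})
      = ENNReal.ofReal (omegaN n * r ^ (n : ℝ)) := by
  haveI : Nontrivial (EuclideanSpace ℝ (Fin n)) :=
    ⟨⟨0, EuclideanSpace.single ⟨0, hn⟩ 1, fun h => by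
      have := congrArg (fun v => v ⟨0, hn⟩) h
      simp [EuclideanSpace.single_apply] at this⟩⟩
  have h0 : volume ({0} : Set (EuclideanSpace ℝ (Fin n))) = 0 := by
    have h := Measure.addHaar_closedBall (μ := volume) (0 : EuclideanSpace ℝ (Fin n)) le_rfl
    rw [Metric.closedBall_zero, finrank_euclideanSpace_fin, zero_pow hn.ne',
      ENNReal.ofReal_zero, zero_mul] at h
    exact h
  rw [measure_diff_null h0, Measure.addHaar_ball _ _ hr, finrank_euclideanSpace_fin,
    ← ENNReal.ofReal_toReal measure_ball_lt_top.ne, ← ENNReal.ofReal_mul (by positivity),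
    ← Real.rpow_natCast r n]
  rw [omegaN, mul_comm]

lemma distrib_vF {n : ℕ} (hn : 0 < n) {a t : ℝ} (ha : 0 < a) (ht : 0 < t) :
    distrib (vF n a) t = ENNReal.ofReal (omegaN n * rhoV a t ^ (n : ℝ)) := by
  have hrho := rhoV_pos ha t
  have hset : {x : EuclideanSpace ℝ (Fin n) | t < |vF n a x|}
      = Metric.ball 0 (rhoV a t) \ {0} := by
    ext x
    simp only [Set.mem_setOf_eq, Set.mem_diff, mem_ball_zero_iff, Set.mem_singleton_iff]
    rcases eq_or_ne x 0 with rfl | hx0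
    · refine iff_of_false ?_ ?_
      · rw [vF, if_pos (by simp : ‖(0:EuclideanSpace ℝ (Fin n))‖ < 1), norm_zero,
          Real.zero_rpow (neg_ne_zero.mpr ha.ne'), abs_zero]
        exact not_lt.mpr ht.le
      · rintro ⟨-, h⟩; exact h rfl
    · have hb : 0 < ‖x‖ := norm_pos_iff.mpr hx0
      simp only [hx0, not_false_iff, and_true]
      rw [vF]
      by_cases h1 : ‖x‖ < 1
      · rw [if_pos h1, abs_of_nonneg (Real.rpow_nonneg hb.le _)]
        rw [rhoV]
        by_cases h2 : (1:ℝ) ≤ t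
        · rw [if_pos h2, lt_rpow_neg_iff hb ht ha]
        · rw [if_neg h2]; push_neg at h2
          refine iff_of_true ?_ ?_
          · have h3 : 1 < ‖x‖ ^ (-a) :=
              (Real.one_lt_rpow_iff_of_pos hb).mpr (Or.inr ⟨h1, by linarith⟩)
            linarith
          · have : 0 < (1 - t) / a := div_pos (by linarith) ha
            linarith
      · push_neg at h1
        rw [if_neg (not_lt.mpr h1)]
        by_cases h3 : ‖x‖ < 1 + a⁻¹
        · rw [if_pos h3]
          have hpos : 0 < 1 - a * (‖x‖ - 1) := by
            have h4 : a * (‖x‖ - 1) < a * a⁻¹ :=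
              mul_lt_mul_of_pos_left (by linarith) ha
            rw [mul_inv_cancel₀ ha.ne'] at h4; linarith
          rw [abs_of_pos hpos, rhoV]
          by_cases h2 : (1:ℝ) ≤ t
          · rw [if_pos h2]
            refine iff_of_false ?_ ?_
            · have : 0 ≤ a * (‖x‖ - 1) := mul_nonneg ha.le (by linarith)
              linarith
            · intro hcon
              have h5 : t ^ (-a⁻¹) ≤ 1 :=
                Real.rpow_le_one_of_one_le_of_nonpos h2 (neg_nonpos.mpr (inv_pos.mpr ha).le)
              linarith
          · rw [if_neg h2]; push_neg at h2
            constructor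
            · intro h
              have h5 : (‖x‖ - 1) * a < 1 - t := by nlinarith [mul_comm a (‖x‖ - 1)]
              have h6 : ‖x‖ - 1 < (1 - t) / a := (lt_div_iff₀ ha).mpr h5
              linarith
            · intro h
              have h6 : ‖x‖ - 1 < (1 - t) / a := by linarith
              have h5 : (‖x‖ - 1) * a < 1 - t := (lt_div_iff₀ ha).mp h6
              nlinarith [mul_comm a (‖x‖ - 1)]
        · rw [if_neg h3]; push_neg at h3
          refine iff_of_false (by rw [abs_zero]; exact not_lt.mpr ht.le) ?_
          rw [rhoV]
          by_cases h2 : (1:ℝ) ≤ t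
          · rw [if_pos h2]
            intro hcon
            have h5 : t ^ (-a⁻¹) ≤ 1 :=
              Real.rpow_le_one_of_one_le_of_nonpos h2 (neg_nonpos.mpr (inv_pos.mpr ha).le)
            have : (0:ℝ) < a⁻¹ := inv_pos.mpr ha
            linarith
          · rw [if_neg h2]; push_neg at h2
            intro hcon
            have h6 : (1 - t) / a < a⁻¹ := by
              rw [inv_eq_one_div]
              gcongr
              · linarith
            linarith
  rw [distrib, hset, volume_ball_diff hn hrho.le]

lemma distrib_gF {n : ℕ} (hn : 0 < n) {a k t : ℝ} (ha : 0 < a) (hk : 0 < k) (ht : 0 < t) :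
    distrib (gF n a k) t = ENNReal.ofReal (omegaN n * rhoG a k t ^ (n : ℝ)) := by
  have hrho := rhoG_pos (k := k) ha t
  have hset : {x : EuclideanSpace ℝ (Fin n) | t < |gF n a k x|}
      = Metric.ball 0 (rhoG a k t) \ {0} := by
    ext x
    simp only [Set.mem_setOf_eq, Set.mem_diff, mem_ball_zero_iff, Set.mem_singleton_iff]
    rcases eq_or_ne x 0 with rfl | hx0
    · refine iff_of_false ?_ ?_
      · rw [gF, if_pos (by simp : ‖(0:EuclideanSpace ℝ (Fin n))‖ < 1), norm_zero,
          Real.zero_rpow (neg_ne_zero.mpr hk.ne'), mul_zero, abs_zero]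
        exact not_lt.mpr ht.le
      · rintro ⟨-, h⟩; exact h rfl
    · have hb : 0 < ‖x‖ := norm_pos_iff.mpr hx0
      simp only [hx0, not_false_iff, and_true]
      rw [gF]
      by_cases h1 : ‖x‖ < 1
      · rw [if_pos h1, abs_of_nonneg (mul_nonneg ha.le (Real.rpow_nonneg hb.le _))]
        have hstep : t < a * ‖x‖ ^ (-k) ↔ t / a < ‖x‖ ^ (-k) := by
          rw [div_lt_iff₀ ha, mul_comm]
        rw [hstep, lt_rpow_neg_iff hb (div_pos ht ha) hk, rhoG]
        by_cases h2 : a ≤ t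
        · rw [if_pos h2]
        · rw [if_neg h2]; push_neg at h2
          refine iff_of_true ?_ (by linarith [inv_pos.mpr ha])
          have h4 : t / a < 1 := (div_lt_one ha).mpr h2
          have h5 : 1 < (t / a) ^ (-k⁻¹) :=
            (Real.one_lt_rpow_iff_of_pos (div_pos ht ha)).mpr
              (Or.inr ⟨h4, neg_lt_zero.mpr (inv_pos.mpr hk)⟩)
          linarith
      · push_neg at h1
        rw [if_neg (not_lt.mpr h1)]
        by_cases h3 : ‖x‖ < 1 + a⁻¹
        · rw [if_pos h3, abs_of_pos ha, rhoG]
          by_cases h2 : a ≤ t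
          · rw [if_pos h2]
            refine iff_of_false (not_lt.mpr h2) ?_
            intro hcon
            have h4 : (1:ℝ) ≤ t / a := (one_le_div ha).mpr h2
            have h5 : (t / a) ^ (-k⁻¹) ≤ 1 :=
              Real.rpow_le_one_of_one_le_of_nonpos h4 (neg_nonpos.mpr (inv_pos.mpr hk).le)
            linarith
          · rw [if_neg h2]; push_neg at h2
            exact iff_of_true h2 h3
        · rw [if_neg h3]; push_neg at h3
          refine iff_of_false (by rw [abs_zero]; exact not_lt.mpr ht.le) ?_
          rw [rhoG]
          by_cases h2 : a ≤ t
          · rw [if_pos h2]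
            intro hcon
            have h4 : (1:ℝ) ≤ t / a := (one_le_div ha).mpr h2
            have h5 : (t / a) ^ (-k⁻¹) ≤ 1 :=
              Real.rpow_le_one_of_one_le_of_nonpos h4 (neg_nonpos.mpr (inv_pos.mpr hk).le)
            have : (0:ℝ) < a⁻¹ := inv_pos.mpr ha
            linarith
          · rw [if_neg h2]
            exact not_lt.mpr h3
  rw [distrib, hset, volume_ball_diff hn hrho.le]

lemma rearr_vF {n : ℕ} (hn : 0 < n) {a s : ℝ} (ha : 0 < a) (hs : 0 < s) :
    rearr (vF n a) s =
      if s < omegaN n then ((s / omegaN n) ^ ((n:ℝ)⁻¹)) ^ (-a)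
      else if s < omegaN n * (1 + a⁻¹) ^ (n:ℝ) then
        1 - a * ((s / omegaN n) ^ ((n:ℝ)⁻¹) - 1)
      else 0 := by
  have hω : 0 < omegaN n := omegaN_pos hn
  have hnn : (0:ℝ) < (n:ℝ) := by exact_mod_cast hn
  have hrs0 : 0 < (s / omegaN n) ^ ((n:ℝ)⁻¹) := Real.rpow_pos_of_pos (div_pos hs hω) _
  have hsetS : {t : ℝ | 0 < t ∧ ENNReal.ofReal s < distrib (vF n a) t}
      = {t : ℝ | 0 < t ∧ (s / omegaN n) ^ ((n:ℝ)⁻¹) < rhoV a t} := by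
    ext t
    simp only [Set.mem_setOf_eq]
    refine and_congr_right fun ht => ?_
    rw [distrib_vF hn ha ht, ENNReal.ofReal_lt_ofReal_iff_of_nonneg hs.le,
      Real.rpow_inv_lt_iff_of_pos (div_nonneg hs.le hω.le) (rhoV_pos ha t).le hnn,
      div_lt_iff₀ hω, mul_comm (omegaN n)]
  rw [rearr, hsetS]
  by_cases hs1 : s < omegaN n
  · rw [if_pos hs1]
    have hrs1 : (s / omegaN n) ^ ((n:ℝ)⁻¹) < 1 :=
      Real.rpow_lt_one (div_nonneg hs.le hω.le) ((div_lt_one hω).mpr hs1) (inv_pos.mpr hnn)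
    have hc : 1 < ((s / omegaN n) ^ ((n:ℝ)⁻¹)) ^ (-a) :=
      (Real.one_lt_rpow_iff_of_pos hrs0).mpr (Or.inr ⟨hrs1, neg_lt_zero.mpr ha⟩)
    have hSeq : {t : ℝ | 0 < t ∧ (s / omegaN n) ^ ((n:ℝ)⁻¹) < rhoV a t}
        = Set.Ioo 0 (((s / omegaN n) ^ ((n:ℝ)⁻¹)) ^ (-a)) := by
      ext t
      simp only [Set.mem_setOf_eq, Set.mem_Ioo]
      refine and_congr_right fun ht => ?_
      rw [rhoV]
      by_cases h2 : (1:ℝ) ≤ t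
      · rw [if_pos h2]
        have h3 := lt_rpow_neg_iff ht hrs0 (inv_pos.mpr ha)
        rw [inv_inv] at h3
        exact h3
      · rw [if_neg h2]; push_neg at h2
        refine iff_of_true ?_ (lt_trans h2 hc)
        have : 0 < (1 - t) / a := div_pos (by linarith) ha
        linarith
    rw [hSeq, csSup_Ioo (Real.rpow_pos_of_pos hrs0 _)]
  · push_neg at hs1
    have hrs1 : (1:ℝ) ≤ (s / omegaN n) ^ ((n:ℝ)⁻¹) :=
      Real.one_le_rpow ((one_le_div hω).mpr hs1) (inv_pos.mpr hnn).le
    by_cases hs2 : s < omegaN n * (1 + a⁻¹) ^ (n:ℝ)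
    · rw [if_neg (not_lt.mpr hs1), if_pos hs2]
      have hrsR : (s / omegaN n) ^ ((n:ℝ)⁻¹) < 1 + a⁻¹ := by
        rw [Real.rpow_inv_lt_iff_of_pos (div_nonneg hs.le hω.le) (by positivity) hnn,
          div_lt_iff₀ hω]
        linarith [mul_comm (omegaN n) ((1 + a⁻¹) ^ (n:ℝ)), hs2]
      have hcpos : 0 < 1 - a * ((s / omegaN n) ^ ((n:ℝ)⁻¹) - 1) := by
        have h4 : a * ((s / omegaN n) ^ ((n:ℝ)⁻¹) - 1) < a * a⁻¹ :=
          mul_lt_mul_of_pos_left (by linarith) ha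
        rw [mul_inv_cancel₀ ha.ne'] at h4; linarith
      have hSeq : {t : ℝ | 0 < t ∧ (s / omegaN n) ^ ((n:ℝ)⁻¹) < rhoV a t}
          = Set.Ioo 0 (1 - a * ((s / omegaN n) ^ ((n:ℝ)⁻¹) - 1)) := by
        ext t
        simp only [Set.mem_setOf_eq, Set.mem_Ioo]
        refine and_congr_right fun ht => ?_
        rw [rhoV]
        by_cases h2 : (1:ℝ) ≤ t
        · rw [if_pos h2]
          refine iff_of_false ?_ ?_
          · have h5 : t ^ (-a⁻¹) ≤ 1 :=
              Real.rpow_le_one_of_one_le_of_nonpos h2 (neg_nonpos.mpr (inv_pos.mpr ha).le)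
            exact not_lt.mpr (by linarith)
          · have h6 : 0 ≤ a * ((s / omegaN n) ^ ((n:ℝ)⁻¹) - 1) :=
              mul_nonneg ha.le (by linarith)
            exact not_lt.mpr (by linarith)
        · rw [if_neg h2]; push_neg at h2
          constructor
          · intro h
            have h5 : ((s / omegaN n) ^ ((n:ℝ)⁻¹) - 1) * a < 1 - t :=
              (lt_div_iff₀ ha).mp (by linarith)
            nlinarith [mul_comm a ((s / omegaN n) ^ ((n:ℝ)⁻¹) - 1)]
          · intro h
            have h5 : ((s / omegaN n) ^ ((n:ℝ)⁻¹) - 1) * a < 1 - t := by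
              nlinarith [mul_comm a ((s / omegaN n) ^ ((n:ℝ)⁻¹) - 1)]
            have h6 := (lt_div_iff₀ ha).mpr h5
            linarith
      rw [hSeq, csSup_Ioo hcpos]
    · rw [if_neg (not_lt.mpr hs1), if_neg hs2]
      push_neg at hs2
      have hRrs : 1 + a⁻¹ ≤ (s / omegaN n) ^ ((n:ℝ)⁻¹) := by
        rw [Real.le_rpow_inv_iff_of_pos (by positivity) (div_nonneg hs.le hω.le) hnn,
          le_div_iff₀ hω, mul_comm]
        exact hs2
      have hSeq : {t : ℝ | 0 < t ∧ (s / omegaN n) ^ ((n:ℝ)⁻¹) < rhoV a t} = (∅ : Set ℝ) := by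
        ext t
        simp only [Set.mem_setOf_eq, Set.mem_empty_iff_false, iff_false, not_and]
        intro ht
        rw [rhoV]
        by_cases h2 : (1:ℝ) ≤ t
        · rw [if_pos h2]
          have h5 : t ^ (-a⁻¹) ≤ 1 :=
            Real.rpow_le_one_of_one_le_of_nonpos h2 (neg_nonpos.mpr (inv_pos.mpr ha).le)
          have : (0:ℝ) < a⁻¹ := inv_pos.mpr ha
          exact not_lt.mpr (by linarith)
        · rw [if_neg h2]; push_neg at h2
          have h6 : (1 - t) / a < a⁻¹ := by
            rw [inv_eq_one_div]
            gcongr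
            linarith
          exact not_lt.mpr (by linarith)
      rw [hSeq, Real.sSup_empty]

lemma rearr_gF {n : ℕ} (hn : 0 < n) {a k s : ℝ} (ha : 0 < a) (hk : 0 < k) (hs : 0 < s) :
    rearr (gF n a k) s =
      if s < omegaN n then a * ((s / omegaN n) ^ ((n:ℝ)⁻¹)) ^ (-k)
      else if s < omegaN n * (1 + a⁻¹) ^ (n:ℝ) then a
      else 0 := by
  have hω : 0 < omegaN n := omegaN_pos hn
  have hnn : (0:ℝ) < (n:ℝ) := by exact_mod_cast hn
  have hrs0 : 0 < (s / omegaN n) ^ ((n:ℝ)⁻¹) := Real.rpow_pos_of_pos (div_pos hs hω) _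
  have hsetS : {t : ℝ | 0 < t ∧ ENNReal.ofReal s < distrib (gF n a k) t}
      = {t : ℝ | 0 < t ∧ (s / omegaN n) ^ ((n:ℝ)⁻¹) < rhoG a k t} := by
    ext t
    simp only [Set.mem_setOf_eq]
    refine and_congr_right fun ht => ?_
    rw [distrib_gF hn ha hk ht, ENNReal.ofReal_lt_ofReal_iff_of_nonneg hs.le,
      Real.rpow_inv_lt_iff_of_pos (div_nonneg hs.le hω.le) (rhoG_pos (k := k) ha t).le hnn,
      div_lt_iff₀ hω, mul_comm (omegaN n)]
  rw [rearr, hsetS]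
  by_cases hs1 : s < omegaN n
  · rw [if_pos hs1]
    have hrs1 : (s / omegaN n) ^ ((n:ℝ)⁻¹) < 1 :=
      Real.rpow_lt_one (div_nonneg hs.le hω.le) ((div_lt_one hω).mpr hs1) (inv_pos.mpr hnn)
    have hc : 1 < ((s / omegaN n) ^ ((n:ℝ)⁻¹)) ^ (-k) :=
      (Real.one_lt_rpow_iff_of_pos hrs0).mpr (Or.inr ⟨hrs1, neg_lt_zero.mpr hk⟩)
    have hSeq : {t : ℝ | 0 < t ∧ (s / omegaN n) ^ ((n:ℝ)⁻¹) < rhoG a k t}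
        = Set.Ioo 0 (a * ((s / omegaN n) ^ ((n:ℝ)⁻¹)) ^ (-k)) := by
      ext t
      simp only [Set.mem_setOf_eq, Set.mem_Ioo]
      refine and_congr_right fun ht => ?_
      rw [rhoG]
      by_cases h2 : a ≤ t
      · rw [if_pos h2]
        have h3 := lt_rpow_neg_iff (div_pos ht ha) hrs0 (inv_pos.mpr hk)
        rw [inv_inv] at h3
        rw [h3, div_lt_iff₀ ha, mul_comm]
      · rw [if_neg h2]; push_neg at h2
        refine iff_of_true (by linarith [inv_pos.mpr ha]) ?_
        have : a * 1 < a * ((s / omegaN n) ^ ((n:ℝ)⁻¹)) ^ (-k) :=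
          mul_lt_mul_of_pos_left hc ha
        linarith
    rw [hSeq, csSup_Ioo (by positivity)]
  · push_neg at hs1
    have hrs1 : (1:ℝ) ≤ (s / omegaN n) ^ ((n:ℝ)⁻¹) :=
      Real.one_le_rpow ((one_le_div hω).mpr hs1) (inv_pos.mpr hnn).le
    by_cases hs2 : s < omegaN n * (1 + a⁻¹) ^ (n:ℝ)
    · rw [if_neg (not_lt.mpr hs1), if_pos hs2]
      have hrsR : (s / omegaN n) ^ ((n:ℝ)⁻¹) < 1 + a⁻¹ := by
        rw [Real.rpow_inv_lt_iff_of_pos (div_nonneg hs.le hω.le) (by positivity) hnn,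
          div_lt_iff₀ hω]
        linarith [mul_comm (omegaN n) ((1 + a⁻¹) ^ (n:ℝ)), hs2]
      have hSeq : {t : ℝ | 0 < t ∧ (s / omegaN n) ^ ((n:ℝ)⁻¹) < rhoG a k t}
          = Set.Ioo 0 a := by
        ext t
        simp only [Set.mem_setOf_eq, Set.mem_Ioo]
        refine and_congr_right fun ht => ?_
        rw [rhoG]
        by_cases h2 : a ≤ t
        · rw [if_pos h2]
          refine iff_of_false ?_ (not_lt.mpr h2)
          have h4 : (1:ℝ) ≤ t / a := (one_le_div ha).mpr h2
          have h5 : (t / a) ^ (-k⁻¹) ≤ 1 :=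
            Real.rpow_le_one_of_one_le_of_nonpos h4 (neg_nonpos.mpr (inv_pos.mpr hk).le)
          exact not_lt.mpr (by linarith)
        · rw [if_neg h2]; push_neg at h2
          exact iff_of_true hrsR h2
      rw [hSeq, csSup_Ioo ha]
    · rw [if_neg (not_lt.mpr hs1), if_neg hs2]
      push_neg at hs2
      have hRrs : 1 + a⁻¹ ≤ (s / omegaN n) ^ ((n:ℝ)⁻¹) := by
        rw [Real.le_rpow_inv_iff_of_pos (by positivity) (div_nonneg hs.le hω.le) hnn,
          le_div_iff₀ hω, mul_comm]
        exact hs2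
      have hSeq : {t : ℝ | 0 < t ∧ (s / omegaN n) ^ ((n:ℝ)⁻¹) < rhoG a k t} = (∅ : Set ℝ) := by
        ext t
        simp only [Set.mem_setOf_eq, Set.mem_empty_iff_false, iff_false, not_and]
        intro ht
        rw [rhoG]
        by_cases h2 : a ≤ t
        · rw [if_pos h2]
          have h4 : (1:ℝ) ≤ t / a := (one_le_div ha).mpr h2
          have h5 : (t / a) ^ (-k⁻¹) ≤ 1 :=
            Real.rpow_le_one_of_one_le_of_nonpos h4 (neg_nonpos.mpr (inv_pos.mpr hk).le)
          have : (0:ℝ) < a⁻¹ := inv_pos.mpr ha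
          exact not_lt.mpr (by linarith)
        · rw [if_neg h2]
          exact not_lt.mpr (by linarith)
      rw [hSeq, Real.sSup_empty]

lemma alg0 {t w m nn : ℝ} (ht : 0 < t) (hw : 0 < w) :
    ((t / w) ^ (nn⁻¹)) ^ (-m) = w ^ (m / nn) * t ^ (-(m / nn)) := by
  rw [← Real.rpow_mul (div_nonneg ht.le hw.le), show nn⁻¹ * -m = -(m / nn) by ring,
    Real.div_rpow ht.le hw.le, Real.rpow_neg hw.le, div_eq_mul_inv, inv_inv, mul_comm]

lemma alg1 {c t x y Q : ℝ} (ht : 0 < t) (hc : 0 ≤ c) :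
    (c * t ^ x * t ^ y) ^ Q / t = c ^ Q * t ^ ((x + y) * Q - 1) := by
  rw [mul_assoc, ← Real.rpow_add ht, Real.mul_rpow hc (Real.rpow_nonneg ht.le _),
    ← Real.rpow_mul ht.le, Real.rpow_sub ht, Real.rpow_one, mul_div_assoc]

lemma integral_Ioo_rpow {c e : ℝ} (hc : 0 < c) (he : 0 < e) :
    (∫ t in Set.Ioo (0:ℝ) c, t ^ (e - 1)) = c ^ e / e := by
  rw [← integral_Ioc_eq_integral_Ioo, ← intervalIntegral.integral_of_le hc.le,
    integral_rpow (Or.inl (by linarith)), sub_add_cancel, Real.zero_rpow he.ne', sub_zero]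

lemma Jv_split {n : ℕ} (hn : 0 < n) {p' q a ε B : ℝ} (hq : 0 < q) (ha : 0 < a)
    (hε : 0 < ε) (he : 1/p' - a/(n:ℝ) = ε/(n:ℝ))
    (hB : omegaN n * (1 + a⁻¹) ^ (n:ℝ) ≤ B)
    {u : EuclideanSpace ℝ (Fin n) → ℝ} (hu : u = vF n a) :
    (∫ t in Set.Ioi (0:ℝ), (rearr u t * t ^ (1/p')) ^ q / t)
      = omegaN n ^ (a*q/(n:ℝ) + q*ε/(n:ℝ)) * ((n:ℝ)/(q*ε))
        + (∫ t in Set.Ioc (omegaN n) B, (rearr u t * t ^ (1/p')) ^ q / t)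
    ∧ (∫ t in Set.Ioc (omegaN n) B, (rearr u t * t ^ (1/p')) ^ q / t)
        ≤ ∫ t in Set.Ioc (omegaN n) B, (t ^ (1/p')) ^ q / t := by
  have hω : 0 < omegaN n := omegaN_pos hn
  have hnn : (0:ℝ) < (n:ℝ) := by exact_mod_cast hn
  set F : ℝ → ℝ := fun t => (rearr u t * t ^ (1/p')) ^ q / t with hF
  have hR1 : (1:ℝ) < 1 + a⁻¹ := by have := inv_pos.mpr ha; linarith
  have hRn : (1:ℝ) < (1 + a⁻¹) ^ (n:ℝ) :=
    (Real.one_lt_rpow_iff_of_pos (by positivity)).mpr (Or.inl ⟨hR1, hnn⟩)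
  set b := omegaN n * (1 + a⁻¹) ^ (n:ℝ) with hbdef
  have hωb : omegaN n < b := by rw [hbdef]; nlinarith
  have hωB : omegaN n < B := lt_of_lt_of_le hωb hB
  have hre : ∀ t, 0 < t → rearr u t =
      if t < omegaN n then ((t / omegaN n) ^ ((n:ℝ)⁻¹)) ^ (-a)
      else if t < b then 1 - a * ((t / omegaN n) ^ ((n:ℝ)⁻¹) - 1) else 0 := by
    intro t ht
    rw [hu, rearr_vF hn ha ht]
  have hpt : ∀ t ∈ Set.Ioo (0:ℝ) (omegaN n),
      F t = omegaN n ^ (a*q/(n:ℝ)) * t ^ (q*ε/(n:ℝ) - 1) := by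
    intro t ht
    obtain ⟨ht0, htω⟩ := ht
    simp only [hF]
    rw [hre t ht0, if_pos htω, alg0 ht0 hω, alg1 ht0 (Real.rpow_nonneg hω.le _),
      ← Real.rpow_mul hω.le, show a/(n:ℝ)*q = a*q/(n:ℝ) by ring,
      show (-(a/(n:ℝ)) + 1/p') * q - 1 = q*ε/(n:ℝ) - 1 by
        rw [show -(a/(n:ℝ)) + 1/p' = ε/(n:ℝ) by linarith]; ring]
  have he2 : 0 < q*ε/(n:ℝ) := by positivity
  have hint1 : (∫ t in Set.Ioc (0:ℝ) (omegaN n), F t)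
      = omegaN n ^ (a*q/(n:ℝ) + q*ε/(n:ℝ)) * ((n:ℝ)/(q*ε)) := by
    rw [integral_Ioc_eq_integral_Ioo, setIntegral_congr_fun measurableSet_Ioo hpt,
      MeasureTheory.integral_const_mul, integral_Ioo_rpow hω he2, Real.rpow_add hω]
    field_simp
  have hI1 : MeasureTheory.IntegrableOn F (Set.Ioc 0 (omegaN n)) := by
    rw [integrableOn_Ioc_iff_integrableOn_Ioo]
    exact (integrableOn_congr_fun hpt measurableSet_Ioo).mpr
      (((intervalIntegral.integrableOn_Ioo_rpow_iff hω).mpr (by linarith)).const_mul _)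
  have hzero : ∀ t ∈ Set.Ioi B, F t = 0 := by
    intro t ht
    have htB : B < t := ht
    have ht0 : 0 < t := lt_trans (lt_trans hω hωB) htB
    simp only [hF]
    rw [hre t ht0, if_neg (not_lt.mpr (by linarith)), if_neg (not_lt.mpr (by linarith)),
      zero_mul, Real.zero_rpow hq.ne', zero_div]
  have hI3 : MeasureTheory.IntegrableOn F (Set.Ioi B) :=
    (integrableOn_congr_fun hzero measurableSet_Ioi).mpr (integrableOn_zero)
  have hint3 : (∫ t in Set.Ioi B, F t) = 0 := by
    rw [setIntegral_congr_fun measurableSet_Ioi hzero, integral_zero]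
  set G : ℝ → ℝ := fun t =>
    if t < b then ((1 - a * ((t / omegaN n) ^ ((n:ℝ)⁻¹) - 1)) * t ^ (1/p')) ^ q / t else 0
    with hG
  have hFG : Set.EqOn F G (Set.Ioc (omegaN n) B) := by
    intro t ht
    have ht0 : 0 < t := lt_trans hω ht.1
    simp only [hF, hG]
    rw [hre t ht0, if_neg (not_lt.mpr ht.1.le)]
    by_cases h2 : t < b
    · rw [if_pos h2, if_pos h2]
    · rw [if_neg h2, if_neg h2, zero_mul, Real.zero_rpow hq.ne', zero_div]
  have hcont : ContinuousOn
      (fun t => ((1 - a * ((t / omegaN n) ^ ((n:ℝ)⁻¹) - 1)) * t ^ (1/p')) ^ q / t)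
      (Set.Icc (omegaN n) b) := by
    apply ContinuousOn.div
    · apply ContinuousOn.rpow_const
      · apply ContinuousOn.mul
        · exact continuousOn_const.sub (continuousOn_const.mul
            (((continuousOn_id.div_const _).rpow_const
              (fun x _ => Or.inr (by positivity))).sub continuousOn_const))
        · exact continuousOn_id.rpow_const
            (fun x hx => Or.inl (lt_of_lt_of_le hω hx.1).ne')
      · exact fun x _ => Or.inr hq.le
    · exact continuousOn_id
    · intro x hx; exact (lt_of_lt_of_le hω hx.1).ne'
  have hGmid : MeasureTheory.IntegrableOn G (Set.Ioc (omegaN n) b) := by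
    have hEq : Set.EqOn G
        (fun t => ((1 - a * ((t / omegaN n) ^ ((n:ℝ)⁻¹) - 1)) * t ^ (1/p')) ^ q / t)
        (Set.Ioc (omegaN n) b) := by
      intro t ht
      simp only [hG]
      by_cases h2 : t < b
      · rw [if_pos h2]
      · have htb : t = b := le_antisymm ht.2 (not_lt.mp h2)
        rw [if_neg h2, htb]
        have hbω : (b / omegaN n) = (1 + a⁻¹) ^ (n:ℝ) := by
          rw [hbdef]; field_simp
        have h3 : ((b / omegaN n) ^ ((n:ℝ)⁻¹)) = 1 + a⁻¹ := by
          rw [hbω, Real.rpow_rpow_inv (by positivity) hnn.ne']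
        rw [h3, show 1 - a * (1 + a⁻¹ - 1) = 0 by field_simp; ring, zero_mul,
          Real.zero_rpow hq.ne', zero_div]
    exact (integrableOn_congr_fun hEq measurableSet_Ioc).mpr
      (hcont.integrableOn_Icc.mono_set Set.Ioc_subset_Icc_self)
  have hGtail : MeasureTheory.IntegrableOn G (Set.Ioc b B) := by
    have hEq : Set.EqOn G (fun _ => (0:ℝ)) (Set.Ioc b B) := by
      intro t ht; simp only [hG]; rw [if_neg (not_lt.mpr ht.1.le)]
    exact (integrableOn_congr_fun hEq measurableSet_Ioc).mpr (integrableOn_zero)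
  have hI2 : MeasureTheory.IntegrableOn F (Set.Ioc (omegaN n) B) := by
    refine (integrableOn_congr_fun hFG measurableSet_Ioc).mpr ?_
    rw [show Set.Ioc (omegaN n) B = Set.Ioc (omegaN n) b ∪ Set.Ioc b B from
      (Set.Ioc_union_Ioc_eq_Ioc hωb.le hB).symm]
    exact hGmid.union hGtail
  constructor
  · have hI12 : MeasureTheory.IntegrableOn F (Set.Ioc 0 B) := by
      rw [show Set.Ioc (0:ℝ) B = Set.Ioc 0 (omegaN n) ∪ Set.Ioc (omegaN n) B from
        (Set.Ioc_union_Ioc_eq_Ioc hω.le hωB.le).symm]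
      exact hI1.union hI2
    have hsplit1 : (∫ t in Set.Ioi (0:ℝ), F t)
        = (∫ t in Set.Ioc (0:ℝ) B, F t) + (∫ t in Set.Ioi B, F t) := by
      rw [← MeasureTheory.setIntegral_union (Set.Ioc_disjoint_Ioi le_rfl) measurableSet_Ioi
        hI12 hI3, Set.Ioc_union_Ioi_eq_Ioi (by linarith : (0:ℝ) ≤ B)]
    have hsplit2 : (∫ t in Set.Ioc (0:ℝ) B, F t)
        = (∫ t in Set.Ioc (0:ℝ) (omegaN n), F t) + (∫ t in Set.Ioc (omegaN n) B, F t) := by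
      rw [← MeasureTheory.setIntegral_union (Set.Ioc_disjoint_Ioc_of_le le_rfl) measurableSet_Ioc
        hI1 hI2, Set.Ioc_union_Ioc_eq_Ioc hω.le hωB.le]
    rw [hsplit1, hsplit2, hint1, hint3, add_zero]
  · apply MeasureTheory.setIntegral_mono_on hI2 ?_ measurableSet_Ioc ?_
    · apply (ContinuousOn.integrableOn_Icc ?_).mono_set Set.Ioc_subset_Icc_self
      apply ContinuousOn.div
      · exact (continuousOn_id.rpow_const
          (fun x hx => Or.inl (lt_of_lt_of_le hω hx.1).ne')).rpow_const
          (fun x _ => Or.inr hq.le)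
      · exact continuousOn_id
      · intro x hx; exact (lt_of_lt_of_le hω hx.1).ne'
    · intro t ht
      have ht0 : 0 < t := lt_trans hω ht.1
      have h01 : 0 ≤ rearr u t := rearr_nonneg u t
      have hle1 : rearr u t ≤ 1 := by
        rw [hre t ht0, if_neg (not_lt.mpr ht.1.le)]
        by_cases h2 : t < b
        · rw [if_pos h2]
          have hge1 : (1:ℝ) ≤ (t / omegaN n) ^ ((n:ℝ)⁻¹) :=
            Real.one_le_rpow ((one_le_div hω).mpr ht.1.le) (by positivity)
          nlinarith
        · rw [if_neg h2]; linarith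
      have h2 : rearr u t * t ^ (1/p') ≤ t ^ (1/p') :=
        mul_le_of_le_one_left (Real.rpow_nonneg ht0.le _) hle1
      have h3 := Real.rpow_le_rpow (mul_nonneg h01 (Real.rpow_nonneg ht0.le _)) h2 hq.le
      exact (div_le_div_iff_of_pos_right ht0).mpr h3

lemma Jg_split {n : ℕ} (hn : 0 < n) {p' q a k ε B c2 : ℝ} (hq : 0 < q) (ha : 0 < a)
    (hk : 0 < k) (hε : 0 < ε) (he : 1/p' - k/(n:ℝ) = ε/(n:ℝ))
    (hB : omegaN n * (1 + a⁻¹) ^ (n:ℝ) ≤ B) (hc2 : a ≤ c2)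
    {u : EuclideanSpace ℝ (Fin n) → ℝ} (hu : u = gF n a k) :
    (∫ t in Set.Ioi (0:ℝ), (rearr u t * t ^ (1/p')) ^ q / t)
      = a ^ q * omegaN n ^ (k*q/(n:ℝ) + q*ε/(n:ℝ)) * ((n:ℝ)/(q*ε))
        + (∫ t in Set.Ioc (omegaN n) B, (rearr u t * t ^ (1/p')) ^ q / t)
    ∧ (∫ t in Set.Ioc (omegaN n) B, (rearr u t * t ^ (1/p')) ^ q / t)
        ≤ ∫ t in Set.Ioc (omegaN n) B, (c2 * t ^ (1/p')) ^ q / t := by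
  have hω : 0 < omegaN n := omegaN_pos hn
  have hnn : (0:ℝ) < (n:ℝ) := by exact_mod_cast hn
  set F : ℝ → ℝ := fun t => (rearr u t * t ^ (1/p')) ^ q / t with hF
  have hR1 : (1:ℝ) < 1 + a⁻¹ := by have := inv_pos.mpr ha; linarith
  have hRn : (1:ℝ) < (1 + a⁻¹) ^ (n:ℝ) :=
    (Real.one_lt_rpow_iff_of_pos (by positivity)).mpr (Or.inl ⟨hR1, hnn⟩)
  set b := omegaN n * (1 + a⁻¹) ^ (n:ℝ) with hbdef
  have hωb : omegaN n < b := by rw [hbdef]; nlinarith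
  have hωB : omegaN n < B := lt_of_lt_of_le hωb hB
  have hre : ∀ t, 0 < t → rearr u t =
      if t < omegaN n then a * ((t / omegaN n) ^ ((n:ℝ)⁻¹)) ^ (-k)
      else if t < b then a else 0 := by
    intro t ht
    rw [hu, rearr_gF hn ha hk ht]
  have hpt : ∀ t ∈ Set.Ioo (0:ℝ) (omegaN n),
      F t = a ^ q * omegaN n ^ (k*q/(n:ℝ)) * t ^ (q*ε/(n:ℝ) - 1) := by
    intro t ht
    obtain ⟨ht0, htω⟩ := ht
    simp only [hF]
    rw [hre t ht0, if_pos htω, alg0 ht0 hω, ← mul_assoc,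
      alg1 ht0 (mul_nonneg ha.le (Real.rpow_nonneg hω.le _)),
      Real.mul_rpow ha.le (Real.rpow_nonneg hω.le _),
      ← Real.rpow_mul hω.le, show k/(n:ℝ)*q = k*q/(n:ℝ) by ring,
      show (-(k/(n:ℝ)) + 1/p') * q - 1 = q*ε/(n:ℝ) - 1 by
        rw [show -(k/(n:ℝ)) + 1/p' = ε/(n:ℝ) by linarith]; ring]
  have he2 : 0 < q*ε/(n:ℝ) := by positivity
  have hint1 : (∫ t in Set.Ioc (0:ℝ) (omegaN n), F t)
      = a ^ q * omegaN n ^ (k*q/(n:ℝ) + q*ε/(n:ℝ)) * ((n:ℝ)/(q*ε)) := by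
    rw [integral_Ioc_eq_integral_Ioo, setIntegral_congr_fun measurableSet_Ioo hpt,
      MeasureTheory.integral_const_mul, integral_Ioo_rpow hω he2, Real.rpow_add hω]
    field_simp
  have hI1 : MeasureTheory.IntegrableOn F (Set.Ioc 0 (omegaN n)) := by
    rw [integrableOn_Ioc_iff_integrableOn_Ioo]
    exact (integrableOn_congr_fun hpt measurableSet_Ioo).mpr
      (((intervalIntegral.integrableOn_Ioo_rpow_iff hω).mpr (by linarith)).const_mul _)
  have hzero : ∀ t ∈ Set.Ioi B, F t = 0 := by
    intro t ht
    have htB : B < t := ht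
    have ht0 : 0 < t := lt_trans (lt_trans hω hωB) htB
    simp only [hF]
    rw [hre t ht0, if_neg (not_lt.mpr (by linarith)), if_neg (not_lt.mpr (by linarith)),
      zero_mul, Real.zero_rpow hq.ne', zero_div]
  have hI3 : MeasureTheory.IntegrableOn F (Set.Ioi B) :=
    (integrableOn_congr_fun hzero measurableSet_Ioi).mpr (integrableOn_zero)
  have hint3 : (∫ t in Set.Ioi B, F t) = 0 := by
    rw [setIntegral_congr_fun measurableSet_Ioi hzero, integral_zero]
  set G : ℝ → ℝ := fun t => if t < b then (a * t ^ (1/p')) ^ q / t else 0 with hG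
  have hFG : Set.EqOn F G (Set.Ioc (omegaN n) B) := by
    intro t ht
    have ht0 : 0 < t := lt_trans hω ht.1
    simp only [hF, hG]
    rw [hre t ht0, if_neg (not_lt.mpr ht.1.le)]
    by_cases h2 : t < b
    · rw [if_pos h2, if_pos h2]
    · rw [if_neg h2, if_neg h2, zero_mul, Real.zero_rpow hq.ne', zero_div]
  have hGmid : MeasureTheory.IntegrableOn G (Set.Ioc (omegaN n) b) := by
    rw [integrableOn_Ioc_iff_integrableOn_Ioo]
    have hEq : Set.EqOn G (fun t => (a * t ^ (1/p')) ^ q / t) (Set.Ioo (omegaN n) b) := by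
      intro t ht; simp only [hG]; rw [if_pos ht.2]
    refine (integrableOn_congr_fun hEq measurableSet_Ioo).mpr ?_
    apply (ContinuousOn.integrableOn_Icc (a := omegaN n) (b := b) ?_).mono_set
      Set.Ioo_subset_Icc_self
    apply ContinuousOn.div
    · exact (continuousOn_const.mul (continuousOn_id.rpow_const
        (fun x hx => Or.inl (lt_of_lt_of_le hω hx.1).ne'))).rpow_const
        (fun x _ => Or.inr hq.le)
    · exact continuousOn_id
    · intro x hx; exact (lt_of_lt_of_le hω hx.1).ne'
  have hGtail : MeasureTheory.IntegrableOn G (Set.Ioc b B) := by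
    have hEq : Set.EqOn G (fun _ => (0:ℝ)) (Set.Ioc b B) := by
      intro t ht; simp only [hG]; rw [if_neg (not_lt.mpr ht.1.le)]
    exact (integrableOn_congr_fun hEq measurableSet_Ioc).mpr (integrableOn_zero)
  have hI2 : MeasureTheory.IntegrableOn F (Set.Ioc (omegaN n) B) := by
    refine (integrableOn_congr_fun hFG measurableSet_Ioc).mpr ?_
    rw [show Set.Ioc (omegaN n) B = Set.Ioc (omegaN n) b ∪ Set.Ioc b B from
      (Set.Ioc_union_Ioc_eq_Ioc hωb.le hB).symm]
    exact hGmid.union hGtail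
  constructor
  · have hI12 : MeasureTheory.IntegrableOn F (Set.Ioc 0 B) := by
      rw [show Set.Ioc (0:ℝ) B = Set.Ioc 0 (omegaN n) ∪ Set.Ioc (omegaN n) B from
        (Set.Ioc_union_Ioc_eq_Ioc hω.le hωB.le).symm]
      exact hI1.union hI2
    have hsplit1 : (∫ t in Set.Ioi (0:ℝ), F t)
        = (∫ t in Set.Ioc (0:ℝ) B, F t) + (∫ t in Set.Ioi B, F t) := by
      rw [← MeasureTheory.setIntegral_union (Set.Ioc_disjoint_Ioi le_rfl) measurableSet_Ioi
        hI12 hI3, Set.Ioc_union_Ioi_eq_Ioi (by linarith : (0:ℝ) ≤ B)]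
    have hsplit2 : (∫ t in Set.Ioc (0:ℝ) B, F t)
        = (∫ t in Set.Ioc (0:ℝ) (omegaN n), F t) + (∫ t in Set.Ioc (omegaN n) B, F t) := by
      rw [← MeasureTheory.setIntegral_union (Set.Ioc_disjoint_Ioc_of_le le_rfl) measurableSet_Ioc
        hI1 hI2, Set.Ioc_union_Ioc_eq_Ioc hω.le hωB.le]
    rw [hsplit1, hsplit2, hint1, hint3, add_zero]
  · apply MeasureTheory.setIntegral_mono_on hI2 ?_ measurableSet_Ioc ?_
    · apply (ContinuousOn.integrableOn_Icc (a := omegaN n) (b := B) ?_).mono_set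
        Set.Ioc_subset_Icc_self
      apply ContinuousOn.div
      · exact (continuousOn_const.mul (continuousOn_id.rpow_const
          (fun x hx => Or.inl (lt_of_lt_of_le hω hx.1).ne'))).rpow_const
          (fun x _ => Or.inr hq.le)
      · exact continuousOn_id
      · intro x hx; exact (lt_of_lt_of_le hω hx.1).ne'
    · intro t ht
      have ht0 : 0 < t := lt_trans hω ht.1
      have h01 : 0 ≤ rearr u t := rearr_nonneg u t
      have hle1 : rearr u t ≤ c2 := by
        rw [hre t ht0, if_neg (not_lt.mpr ht.1.le)]
        by_cases h2 : t < b
        · rw [if_pos h2]; exact hc2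
        · rw [if_neg h2]; linarith
      have h2 : rearr u t * t ^ (1/p') ≤ c2 * t ^ (1/p') :=
        mul_le_mul_of_nonneg_right hle1 (Real.rpow_nonneg ht0.le _)
      have h3 := Real.rpow_le_rpow (mul_nonneg h01 (Real.rpow_nonneg ht0.le _)) h2 hq.le
      exact (div_le_div_iff_of_pos_right ht0).mpr h3

end SharpAux

open SharpAux

/-- sharpness of the constant `(p/(n-p)) ω_n^{-1/n}` in `(A_{p,q})`,
`p < q < ∞`, via the family `v_ε` with (generalized) gradient `g_ε`. -/
theorem sharpness_Apq {n : ℕ} (p q : ℝ) (hp : 1 ≤ p) (hpn : p < n) (hq : p < q)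
    (ps : ℝ) (hps : ps = n * p / (n - p))
    (v g : ℝ → EuclideanSpace ℝ (Fin n) → ℝ)
    (hv : ∀ ε x, v ε x =
      if ‖x‖ < 1 then ‖x‖ ^ (-((n:ℝ) - p) / p + ε)
      else if ‖x‖ < 1 + (((n:ℝ) - p) / p - ε)⁻¹ then 1 - (((n:ℝ) - p) / p - ε) * (‖x‖ - 1)
      else 0)
    (hg : ∀ ε x, g ε x =
      if ‖x‖ < 1 then (((n:ℝ) - p) / p - ε) * ‖x‖ ^ (-(n:ℝ) / p + ε)
      else if ‖x‖ < 1 + (((n:ℝ) - p) / p - ε)⁻¹ then ((n:ℝ) - p) / p - ε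
      else 0) :
    Filter.Tendsto (fun ε : ℝ =>
        (∫ t in Set.Ioi (0:ℝ), (rearr (g ε) t * t ^ (1/p)) ^ q / t) /
        (∫ t in Set.Ioi (0:ℝ), (rearr (v ε) t * t ^ (1/ps)) ^ q / t))
      (nhdsWithin 0 (Set.Ioi 0))
      (nhds (omegaN n ^ (q / (n:ℝ)) * (((n:ℝ) - p) / p) ^ q)) ∧
    ∀ C : ℝ, 0 ≤ C →
      (∀ ε ∈ Set.Ioo (0:ℝ) (((n:ℝ) - p) / p),
        (∫ t in Set.Ioi (0:ℝ), (rearr (v ε) t * t ^ (1/ps)) ^ q / t) ^ (1/q)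
          ≤ C * (∫ t in Set.Ioi (0:ℝ), (rearr (g ε) t * t ^ (1/p)) ^ q / t) ^ (1/q)) →
      (p / ((n:ℝ) - p)) * omegaN n ^ (-(1:ℝ) / (n:ℝ)) ≤ C := by
  have hp0 : 0 < p := lt_of_lt_of_le one_pos hp
  have hq0 : 0 < q := lt_trans hp0 hq
  have hnn : (0:ℝ) < (n:ℝ) := lt_trans hp0 hpn
  have hn0 : 0 < n := by exact_mod_cast hnn
  have hnp : 0 < (n:ℝ) - p := by linarith
  have hω : 0 < omegaN n := omegaN_pos hn0
  have hpne : p ≠ 0 := hp0.ne'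
  have hnne : (n:ℝ) ≠ 0 := hnn.ne'
  have hnpne : (n:ℝ) - p ≠ 0 := hnp.ne'
  set a0 := ((n:ℝ) - p) / p with ha0def
  have ha0 : 0 < a0 := div_pos hnp hp0
  have hps' : 1/ps = a0/(n:ℝ) := by
    rw [hps, ha0def]; field_simp
  set B := omegaN n * (1 + 2/a0) ^ (n:ℝ) with hBdef
  have hBbig : ∀ ε ∈ Set.Ioo (0:ℝ) (a0/2), omegaN n * (1 + (a0 - ε)⁻¹) ^ (n:ℝ) ≤ B := by
    intro ε hε
    rw [hBdef]
    have ha : 0 < a0 - ε := by linarith [hε.2]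
    have h2 : a0/2 ≤ a0 - ε := by linarith [hε.2]
    have h1 : (a0 - ε)⁻¹ ≤ 2/a0 := by
      have h3 := one_div_le_one_div_of_le (half_pos ha0) h2
      rw [one_div, one_div, inv_div] at h3
      exact h3
    have h4 := Real.rpow_le_rpow (by positivity)
      (by linarith : 1 + (a0 - ε)⁻¹ ≤ 1 + 2/a0) hnn.le
    exact mul_le_mul_of_nonneg_left h4 hω.le
  have hveq : ∀ ε : ℝ, v ε = vF n (a0 - ε) := by
    intro ε; funext x
    rw [hv ε x, show -((n:ℝ) - p) / p + ε = -(a0 - ε) by rw [ha0def]; ring]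
    simp only [vF]
  have hgeq : ∀ ε : ℝ, g ε = gF n (a0 - ε) ((n:ℝ)/p - ε) := by
    intro ε; funext x
    rw [hg ε x, show -(n:ℝ) / p + ε = -((n:ℝ)/p - ε) by ring]
    simp only [gF]
  have hMGnn : ∀ ε : ℝ,
      0 ≤ ∫ t in Set.Ioc (omegaN n) B, (rearr (g ε) t * t ^ (1/p)) ^ q / t := by
    intro ε
    refine setIntegral_nonneg measurableSet_Ioc fun t ht => ?_
    have ht0 : 0 < t := lt_trans hω ht.1
    exact div_nonneg (Real.rpow_nonneg
      (mul_nonneg (rearr_nonneg _ _) (Real.rpow_nonneg ht0.le _)) _) ht0.le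
  have hMVnn : ∀ ε : ℝ,
      0 ≤ ∫ t in Set.Ioc (omegaN n) B, (rearr (v ε) t * t ^ (1/ps)) ^ q / t := by
    intro ε
    refine setIntegral_nonneg measurableSet_Ioc fun t ht => ?_
    have ht0 : 0 < t := lt_trans hω ht.1
    exact div_nonneg (Real.rpow_nonneg
      (mul_nonneg (rearr_nonneg _ _) (Real.rpow_nonneg ht0.le _)) _) ht0.le
  have key : ∀ ε ∈ Set.Ioo (0:ℝ) (a0/2),
      ((∫ t in Set.Ioi (0:ℝ), (rearr (g ε) t * t ^ (1/p)) ^ q / t)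
        = (a0 - ε) ^ q * omegaN n ^ (q/p) * ((n:ℝ)/(q*ε))
          + ∫ t in Set.Ioc (omegaN n) B, (rearr (g ε) t * t ^ (1/p)) ^ q / t)
      ∧ ((∫ t in Set.Ioi (0:ℝ), (rearr (v ε) t * t ^ (1/ps)) ^ q / t)
        = omegaN n ^ (a0*q/(n:ℝ)) * ((n:ℝ)/(q*ε))
          + ∫ t in Set.Ioc (omegaN n) B, (rearr (v ε) t * t ^ (1/ps)) ^ q / t)
      ∧ ((∫ t in Set.Ioc (omegaN n) B, (rearr (g ε) t * t ^ (1/p)) ^ q / t)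
          ≤ ∫ t in Set.Ioc (omegaN n) B, (a0 * t ^ (1/p)) ^ q / t)
      ∧ ((∫ t in Set.Ioc (omegaN n) B, (rearr (v ε) t * t ^ (1/ps)) ^ q / t)
          ≤ ∫ t in Set.Ioc (omegaN n) B, (t ^ (1/ps)) ^ q / t) := by
    intro ε hε
    obtain ⟨hε0, hεlt⟩ := hε
    have ha : 0 < a0 - ε := by linarith
    have hk : 0 < (n:ℝ)/p - ε := by
      have h1 : a0 < (n:ℝ)/p := by
        rw [ha0def]
        exact (div_lt_div_iff_of_pos_right hp0).mpr (by linarith)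
      linarith
    have heg : 1/p - ((n:ℝ)/p - ε)/(n:ℝ) = ε/(n:ℝ) := by field_simp; ring
    have hev : 1/ps - (a0 - ε)/(n:ℝ) = ε/(n:ℝ) := by rw [hps']; ring
    have hBb := hBbig ε ⟨hε0, hεlt⟩
    obtain ⟨hg1, hg2⟩ := Jg_split hn0 hq0 ha hk hε0 heg hBb (by linarith : a0 - ε ≤ a0) (hgeq ε)
    obtain ⟨hv1, hv2⟩ := Jv_split hn0 hq0 ha hε0 hev hBb (hveq ε)
    refine ⟨?_, ?_, hg2, hv2⟩
    · rw [hg1, show ((n:ℝ)/p - ε)*q/(n:ℝ) + q*ε/(n:ℝ) = q/p by field_simp; ring]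
    · rw [hv1, show (a0 - ε)*q/(n:ℝ) + q*ε/(n:ℝ) = a0*q/(n:ℝ) by ring]
  have hEmem : Set.Ioo (0:ℝ) (a0/2) ∈ nhdsWithin (0:ℝ) (Set.Ioi 0) :=
    Ioo_mem_nhdsGT (half_pos ha0)
  have htKg : Tendsto (fun ε : ℝ =>
      ε * ∫ t in Set.Ioc (omegaN n) B, (a0 * t ^ (1/p)) ^ q / t)
      (nhdsWithin 0 (Set.Ioi 0)) (nhds 0) := by
    have h1 : Tendsto (fun ε : ℝ =>
        ε * ∫ t in Set.Ioc (omegaN n) B, (a0 * t ^ (1/p)) ^ q / t) (nhds 0) (nhds 0) := by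
      exact (continuous_id.mul continuous_const).tendsto' _ _ (by simp)
    exact h1.mono_left nhdsWithin_le_nhds
  have htKv : Tendsto (fun ε : ℝ =>
      ε * ∫ t in Set.Ioc (omegaN n) B, (t ^ (1/ps)) ^ q / t)
      (nhdsWithin 0 (Set.Ioi 0)) (nhds 0) := by
    have h1 : Tendsto (fun ε : ℝ =>
        ε * ∫ t in Set.Ioc (omegaN n) B, (t ^ (1/ps)) ^ q / t) (nhds 0) (nhds 0) := by
      exact (continuous_id.mul continuous_const).tendsto' _ _ (by simp)
    exact h1.mono_left nhdsWithin_le_nhds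
  have hMg0 : Tendsto (fun ε : ℝ =>
      ε * ∫ t in Set.Ioc (omegaN n) B, (rearr (g ε) t * t ^ (1/p)) ^ q / t)
      (nhdsWithin 0 (Set.Ioi 0)) (nhds 0) := by
    refine squeeze_zero' ?_ ?_ htKg
    · filter_upwards [hEmem] with ε hε
      exact mul_nonneg hε.1.le (hMGnn ε)
    · filter_upwards [hEmem] with ε hε
      exact mul_le_mul_of_nonneg_left (key ε hε).2.2.1 hε.1.le
  have hMv0 : Tendsto (fun ε : ℝ =>
      ε * ∫ t in Set.Ioc (omegaN n) B, (rearr (v ε) t * t ^ (1/ps)) ^ q / t)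
      (nhdsWithin 0 (Set.Ioi 0)) (nhds 0) := by
    refine squeeze_zero' ?_ ?_ htKv
    · filter_upwards [hEmem] with ε hε
      exact mul_nonneg hε.1.le (hMVnn ε)
    · filter_upwards [hEmem] with ε hε
      exact mul_le_mul_of_nonneg_left (key ε hε).2.2.2 hε.1.le
  have hA : Tendsto (fun ε : ℝ => (a0 - ε) ^ q) (nhdsWithin 0 (Set.Ioi 0))
      (nhds (a0 ^ q)) := by
    have hc : Continuous fun ε : ℝ => (a0 - ε) ^ q :=
      (continuous_const.sub continuous_id).rpow_const (fun x => Or.inr hq0.le)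
    have h1 := hc.tendsto 0
    simp only [sub_zero] at h1
    exact h1.mono_left nhdsWithin_le_nhds
  have hNum : Tendsto (fun ε : ℝ => (a0 - ε) ^ q * omegaN n ^ (q/p) * ((n:ℝ)/q)
      + ε * ∫ t in Set.Ioc (omegaN n) B, (rearr (g ε) t * t ^ (1/p)) ^ q / t)
      (nhdsWithin 0 (Set.Ioi 0))
      (nhds (a0 ^ q * omegaN n ^ (q/p) * ((n:ℝ)/q) + 0)) :=
    ((hA.mul_const _).mul_const _).add hMg0
  have hDen : Tendsto (fun ε : ℝ => omegaN n ^ (a0*q/(n:ℝ)) * ((n:ℝ)/q)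
      + ε * ∫ t in Set.Ioc (omegaN n) B, (rearr (v ε) t * t ^ (1/ps)) ^ q / t)
      (nhdsWithin 0 (Set.Ioi 0))
      (nhds (omegaN n ^ (a0*q/(n:ℝ)) * ((n:ℝ)/q) + 0)) :=
    tendsto_const_nhds.add hMv0
  have hDne : omegaN n ^ (a0*q/(n:ℝ)) * ((n:ℝ)/q) + 0 ≠ 0 := by
    rw [add_zero]
    exact (mul_pos (Real.rpow_pos_of_pos hω _) (div_pos hnn hq0)).ne'
  have hT0 := hNum.div hDen hDne
  have hcongr : (fun ε : ℝ => ((a0 - ε) ^ q * omegaN n ^ (q/p) * ((n:ℝ)/q)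
      + ε * ∫ t in Set.Ioc (omegaN n) B, (rearr (g ε) t * t ^ (1/p)) ^ q / t)
      / (omegaN n ^ (a0*q/(n:ℝ)) * ((n:ℝ)/q)
      + ε * ∫ t in Set.Ioc (omegaN n) B, (rearr (v ε) t * t ^ (1/ps)) ^ q / t))
      =ᶠ[nhdsWithin (0:ℝ) (Set.Ioi 0)] (fun ε : ℝ =>
        (∫ t in Set.Ioi (0:ℝ), (rearr (g ε) t * t ^ (1/p)) ^ q / t) /
        (∫ t in Set.Ioi (0:ℝ), (rearr (v ε) t * t ^ (1/ps)) ^ q / t)) := by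
    filter_upwards [hEmem] with ε hε
    obtain ⟨k1, k2, -, -⟩ := key ε hε
    rw [k1, k2]
    have hεne : ε ≠ 0 := hε.1.ne'
    have e1 : (a0 - ε) ^ q * omegaN n ^ (q/p) * ((n:ℝ)/q)
        + ε * ∫ t in Set.Ioc (omegaN n) B, (rearr (g ε) t * t ^ (1/p)) ^ q / t
        = ε * ((a0 - ε) ^ q * omegaN n ^ (q/p) * ((n:ℝ)/(q*ε))
          + ∫ t in Set.Ioc (omegaN n) B, (rearr (g ε) t * t ^ (1/p)) ^ q / t) := by
      field_simp
    have e2 : omegaN n ^ (a0*q/(n:ℝ)) * ((n:ℝ)/q)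
        + ε * ∫ t in Set.Ioc (omegaN n) B, (rearr (v ε) t * t ^ (1/ps)) ^ q / t
        = ε * (omegaN n ^ (a0*q/(n:ℝ)) * ((n:ℝ)/(q*ε))
          + ∫ t in Set.Ioc (omegaN n) B, (rearr (v ε) t * t ^ (1/ps)) ^ q / t) := by
      field_simp
    rw [e1, e2, mul_div_mul_left _ _ hεne]
  have hLval : (a0 ^ q * omegaN n ^ (q/p) * ((n:ℝ)/q) + 0)
      / (omegaN n ^ (a0*q/(n:ℝ)) * ((n:ℝ)/q) + 0)
      = omegaN n ^ (q/(n:ℝ)) * a0 ^ q := by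
    rw [add_zero, add_zero, mul_div_mul_right _ _ (div_pos hnn hq0).ne',
      show q/p = q/(n:ℝ) + a0*q/(n:ℝ) by rw [ha0def]; field_simp; ring,
      Real.rpow_add hω]
    have hne2 : omegaN n ^ (a0*q/(n:ℝ)) ≠ 0 := (Real.rpow_pos_of_pos hω _).ne'
    field_simp
  have hTends : Tendsto (fun ε : ℝ =>
      (∫ t in Set.Ioi (0:ℝ), (rearr (g ε) t * t ^ (1/p)) ^ q / t) /
      (∫ t in Set.Ioi (0:ℝ), (rearr (v ε) t * t ^ (1/ps)) ^ q / t))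
      (nhdsWithin 0 (Set.Ioi 0)) (nhds (omegaN n ^ (q/(n:ℝ)) * a0 ^ q)) := by
    rw [← hLval]
    exact hT0.congr' hcongr
  refine ⟨hTends, ?_⟩
  intro C hC0 hCle
  have hJv_pos : ∀ ε ∈ Set.Ioo (0:ℝ) (a0/2),
      0 < ∫ t in Set.Ioi (0:ℝ), (rearr (v ε) t * t ^ (1/ps)) ^ q / t := by
    intro ε hε
    rw [(key ε hε).2.1]
    have h1 : 0 < omegaN n ^ (a0*q/(n:ℝ)) * ((n:ℝ)/(q*ε)) :=
      mul_pos (Real.rpow_pos_of_pos hω _) (div_pos hnn (mul_pos hq0 hε.1))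
    linarith [hMVnn ε]
  have hJg_pos : ∀ ε ∈ Set.Ioo (0:ℝ) (a0/2),
      0 < ∫ t in Set.Ioi (0:ℝ), (rearr (g ε) t * t ^ (1/p)) ^ q / t := by
    intro ε hε
    rw [(key ε hε).1]
    have h1 : 0 < (a0 - ε) ^ q * omegaN n ^ (q/p) * ((n:ℝ)/(q*ε)) :=
      mul_pos (mul_pos (Real.rpow_pos_of_pos (by linarith [hε.2] : 0 < a0 - ε) _)
        (Real.rpow_pos_of_pos hω _)) (div_pos hnn (mul_pos hq0 hε.1))
    linarith [hMGnn ε]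
  have hCq : ∀ ε ∈ Set.Ioo (0:ℝ) (a0/2),
      (∫ t in Set.Ioi (0:ℝ), (rearr (v ε) t * t ^ (1/ps)) ^ q / t)
        ≤ C ^ q * ∫ t in Set.Ioi (0:ℝ), (rearr (g ε) t * t ^ (1/p)) ^ q / t := by
    intro ε hε
    have hmem : ε ∈ Set.Ioo (0:ℝ) a0 := ⟨hε.1, lt_trans hε.2 (by linarith)⟩
    have h := hCle ε hmem
    have hJv := hJv_pos ε hε
    have hJg := hJg_pos ε hε
    have h2 := Real.rpow_le_rpow (Real.rpow_nonneg hJv.le _) h hq0.le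
    rw [← Real.rpow_mul hJv.le, one_div_mul_cancel hq0.ne', Real.rpow_one,
      Real.mul_rpow hC0 (Real.rpow_nonneg hJg.le _), ← Real.rpow_mul hJg.le,
      one_div_mul_cancel hq0.ne', Real.rpow_one] at h2
    exact h2
  have hCpos : 0 < C := by
    rcases hC0.lt_or_eq with h | h
    · exact h
    · exfalso
      have hε1 : (a0/4 : ℝ) ∈ Set.Ioo (0:ℝ) (a0/2) := ⟨by linarith, by linarith⟩
      have h1 := hCq _ hε1
      rw [← h, Real.zero_rpow hq0.ne', zero_mul] at h1
      exact absurd h1 (not_le.mpr (hJv_pos _ hε1))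
  have hCqpos : 0 < C ^ q := Real.rpow_pos_of_pos hCpos q
  have hev2 : ∀ᶠ ε in nhdsWithin (0:ℝ) (Set.Ioi 0), 1/C^q ≤
      (∫ t in Set.Ioi (0:ℝ), (rearr (g ε) t * t ^ (1/p)) ^ q / t) /
      (∫ t in Set.Ioi (0:ℝ), (rearr (v ε) t * t ^ (1/ps)) ^ q / t) := by
    filter_upwards [hEmem] with ε hε
    rw [div_le_div_iff₀ hCqpos (hJv_pos ε hε), one_mul]
    exact (hCq ε hε).trans_eq (mul_comm _ _)
  have hle := ge_of_tendsto hTends hev2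
  have hLpos : 0 < omegaN n ^ (q/(n:ℝ)) * a0 ^ q :=
    mul_pos (Real.rpow_pos_of_pos hω _) (Real.rpow_pos_of_pos ha0 _)
  have h3 : 1/(omegaN n ^ (q/(n:ℝ)) * a0 ^ q) ≤ C ^ q := (one_div_le hCqpos hLpos).mp hle
  have h4 := Real.rpow_le_rpow (by positivity) h3 (by positivity : (0:ℝ) ≤ 1/q)
  rw [← Real.rpow_mul hC0, mul_one_div, div_self hq0.ne', Real.rpow_one] at h4
  have hfin : (1/(omegaN n ^ (q/(n:ℝ)) * a0 ^ q)) ^ (1/q)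
      = p / ((n:ℝ) - p) * omegaN n ^ (-(1:ℝ)/(n:ℝ)) := by
    rw [one_div, mul_inv, ← Real.rpow_neg hω.le, ← Real.rpow_neg ha0.le,
      Real.mul_rpow (by positivity) (by positivity),
      ← Real.rpow_mul hω.le, ← Real.rpow_mul ha0.le,
      show -(q/(n:ℝ)) * (1/q) = -(1:ℝ)/(n:ℝ) by field_simp,
      show -q * (1/q) = (-1 : ℝ) by field_simp,
      Real.rpow_neg_one, ha0def, inv_div, mul_comm]
  rw [← hfin]
  exact h4
end
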